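/- arXiv:1703.04817 — 8 statements merged into one kernel-verified Lean document; each statement's English description precedes it below -/
import Mathlib

section
/- Let d ≥ 1, θ ∈ ℝ, and a, w_1, …, w_d ∈ ℂ satisfy Re(e^{−iθ}a) > 0 and Re(e^{−iθ}w_i) > 0 for all i = 1, …, d. Then for every α ∈ ℂ with Re(α) > d the family n ↦ (a + n_1 w_1 + ⋯ + n_d w_d)^{−α}, indexed by n ∈ ℕ_0^d and using the principal branch of the complex power, is absolutely summable (in particular a + n·w ≠ 0 for every n ∈ ℕ_0^d). -/
open Complex Filter Topology
open scoped Real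

/-!
Rotating by `e^{-iθ}` moves `a` and every `w i` into the right half-plane, where their real parts
are at least some `c > 0`; hence `‖a + n • w‖ ≥ Re (e^{-iθ} (a + n • w)) ≥ c (1 + ∑ i, n i)`, which
already shows `a + n • w ≠ 0`. Since `‖z ^ (-α)‖ ≤ ‖z‖ ^ (-Re α) e^{π |Im α|}`, the family is
dominated by a multiple of `(1 + ∑ i, n i) ^ (-Re α) ≤ ∏ i, (1 + n i) ^ (-r)` with
`r = (Re α + 1) / (d + 1) > 1`, and this product of `d` convergent `p`-series is summable.
-/

lemma Summable.prod_fin_pi {β : Type*} {f : β → ℝ} (hf : Summable f) (hf0 : ∀ b, 0 ≤ f b) (d : ℕ) :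
    Summable fun n : Fin d → β => ∏ i, f (n i) := by
  induction d with
  | zero => exact .of_finite
  | succ d ih =>
    have hprod := hf.mul_of_nonneg ih hf0 fun n => Finset.prod_nonneg fun i _ => hf0 _
    refine ((Fin.consEquiv fun _ => β).symm.summable_iff.mpr hprod).congr fun n => ?_
    simp [Fin.consEquiv, Fin.prod_univ_succ, Fin.tail]

lemma summable_one_add_nat_rpow_neg {r : ℝ} (hr : 1 < r) :
    Summable fun n : ℕ => ((1 : ℝ) + n) ^ (-r) := by
  refine ((Real.summable_one_div_nat_add_rpow 1 r).mpr hr).congr fun n => ?_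
  rw [abs_of_pos (by positivity), add_comm, one_div, Real.rpow_neg (by positivity)]

lemma one_add_sum_rpow_neg_le_prod {ι : Type*} [Fintype ι] {x : ι → ℝ} (hx : ∀ i, 0 ≤ x i) {r : ℝ}
    (hr : 0 ≤ r) : (1 + ∑ i, x i) ^ (-(Fintype.card ι * r)) ≤ ∏ i, (1 + x i) ^ (-r) := by
  have hx1 : ∀ i, 0 < 1 + x i := fun i => by linarith [hx i]
  have hsum : 0 ≤ ∑ i, x i := Finset.sum_nonneg fun i _ => hx i
  have hprod_le : ∏ i, (1 + x i) ≤ (1 + ∑ i, x i) ^ Fintype.card ι := by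
    rw [← Finset.card_univ, ← Finset.prod_const]
    exact Finset.prod_le_prod (fun i _ => (hx1 i).le)
      fun i _ => add_le_add_right (Finset.single_le_sum (fun j _ => hx j) (Finset.mem_univ i)) 1
  rw [Real.finsetProd_rpow _ _ (fun i _ => (hx1 i).le), neg_mul_eq_mul_neg,
    Real.rpow_natCast_mul (by linarith)]
  exact Real.rpow_le_rpow_of_nonpos (Finset.prod_pos fun i _ => hx1 i) hprod_le (by linarith)

lemma norm_cpow_le_rpow_mul_exp (z α : ℂ) :
    ‖z ^ α‖ ≤ ‖z‖ ^ α.re * Real.exp (π * |α.im|) := by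
  refine (norm_cpow_le z α).trans ?_
  rw [div_eq_mul_inv, ← Real.exp_neg]
  gcongr
  have harg : |z.arg * α.im| ≤ π * |α.im| := by
    rw [abs_mul]
    exact mul_le_mul_of_nonneg_right (abs_arg_le_pi z) (abs_nonneg _)
  linarith [neg_abs_le (z.arg * α.im)]

lemma exists_pos_mul_one_add_sum_le_re {ι : Type*} [Fintype ι] {a : ℂ} {w : ι → ℂ}
    (ha : 0 < a.re) (hw : ∀ i, 0 < (w i).re) :
    ∃ c > 0, ∀ n : ι → ℕ, c * (1 + ∑ i, (n i : ℝ)) ≤ (a + ∑ i, (n i : ℂ) * w i).re := by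
  have hsmall : ∀ᶠ c in 𝓝[>] (0 : ℝ), 0 < c ∧ c ≤ a.re ∧ ∀ i, c ≤ (w i).re := by
    filter_upwards [self_mem_nhdsWithin, nhdsWithin_le_nhds (eventually_le_nhds ha),
      nhdsWithin_le_nhds (eventually_all.2 fun i => eventually_le_nhds (hw i))] with c hc hca hcw
    exact ⟨hc, hca, hcw⟩
  obtain ⟨c, hc, hca, hcw⟩ := hsmall.exists
  refine ⟨c, hc, fun n => ?_⟩
  simp only [add_re, re_sum, mul_re, natCast_re, natCast_im, zero_mul, sub_zero, mul_add, mul_one,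
    Finset.mul_sum]
  refine add_le_add hca (Finset.sum_le_sum fun i _ => ?_)
  rw [mul_comm]
  exact mul_le_mul_of_nonneg_left (hcw i) (Nat.cast_nonneg _)

lemma exists_pos_mul_one_add_sum_le_norm {ι : Type*} [Fintype ι] (θ : ℝ) {a : ℂ} {w : ι → ℂ}
    (ha : 0 < (exp (-(θ : ℂ) * I) * a).re) (hw : ∀ i, 0 < (exp (-(θ : ℂ) * I) * w i).re) :
    ∃ c > 0, ∀ n : ι → ℕ, c * (1 + ∑ i, (n i : ℝ)) ≤ ‖a + ∑ i, (n i : ℂ) * w i‖ := by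
  set u := exp (-(θ : ℂ) * I)
  have hu : ‖u‖ = 1 := by simp [u, norm_exp]
  obtain ⟨c, hc, hle⟩ := exists_pos_mul_one_add_sum_le_re ha hw
  refine ⟨c, hc, fun n => ?_⟩
  calc c * (1 + ∑ i, (n i : ℝ)) ≤ (u * a + ∑ i, (n i : ℂ) * (u * w i)).re := hle n
    _ = (u * (a + ∑ i, (n i : ℂ) * w i)).re := by
      simp only [mul_add, Finset.mul_sum, mul_left_comm]
    _ ≤ ‖a + ∑ i, (n i : ℂ) * w i‖ := by
      simpa [hu] using re_le_norm (u * (a + ∑ i, (n i : ℂ) * w i))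

lemma norm_cpow_neg_le_of_mul_one_add_sum_le {d : ℕ} {c r : ℝ} {z α : ℂ} {n : Fin d → ℕ}
    (hc : 0 < c) (hr : 0 ≤ r) (hrα : d * r ≤ α.re) (hz : c * (1 + ∑ i, (n i : ℝ)) ≤ ‖z‖) :
    ‖z ^ (-α)‖ ≤ c ^ (-α.re) * Real.exp (π * |α.im|) * ∏ i, ((1 : ℝ) + n i) ^ (-r) := by
  have hα : 0 ≤ α.re := (by positivity : (0 : ℝ) ≤ d * r).trans hrα
  calc ‖z ^ (-α)‖ ≤ ‖z‖ ^ (-α.re) * Real.exp (π * |α.im|) := by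
        simpa using norm_cpow_le_rpow_mul_exp z (-α)
    _ ≤ (c * (1 + ∑ i, (n i : ℝ))) ^ (-α.re) * Real.exp (π * |α.im|) := by
        gcongr ?_ * _
        exact Real.rpow_le_rpow_of_nonpos (by positivity) hz (neg_nonpos.2 hα)
    _ = c ^ (-α.re) * Real.exp (π * |α.im|) * (1 + ∑ i, (n i : ℝ)) ^ (-α.re) := by
        rw [Real.mul_rpow hc.le (by positivity)]; ring
    _ ≤ c ^ (-α.re) * Real.exp (π * |α.im|) * (1 + ∑ i, (n i : ℝ)) ^ (-(d * r)) := by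
        gcongr
        exact le_add_of_nonneg_right (by positivity)
    _ ≤ c ^ (-α.re) * Real.exp (π * |α.im|) * ∏ i, ((1 : ℝ) + n i) ^ (-r) := by
        gcongr
        simpa using one_add_sum_rpow_neg_le_prod (fun i => (n i).cast_nonneg) hr

theorem barnes_zeta_abs_summable_general (d : ℕ) (θ : ℝ) (a : ℂ) (w : Fin d → ℂ)
    (ha : 0 < (Complex.exp (-(θ : ℂ) * Complex.I) * a).re)
    (hw : ∀ i, 0 < (Complex.exp (-(θ : ℂ) * Complex.I) * w i).re)
    (α : ℂ) (hα : (d : ℝ) < α.re) :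
    (∀ n : Fin d → ℕ, a + ∑ i, (n i : ℂ) * w i ≠ 0) ∧
    Summable (fun n : Fin d → ℕ => ‖(a + ∑ i, (n i : ℂ) * w i) ^ (-α)‖) := by
  obtain ⟨c, hc, hbound⟩ := exists_pos_mul_one_add_sum_le_norm θ ha hw
  refine ⟨fun n hz => ?_, ?_⟩
  · have hpos : 0 < c * (1 + ∑ i, (n i : ℝ)) := by positivity
    simpa [hz] using hpos.trans_le (hbound n)
  set r := (α.re + 1) / (d + 1)
  have hr : 1 < r := by rw [one_lt_div (by positivity)]; linarith
  have hdr : d * r ≤ α.re := by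
    rw [mul_div_assoc', div_le_iff₀ (by positivity)]; nlinarith
  exact .of_nonneg_of_le (fun _ => norm_nonneg _)
    (fun n => norm_cpow_neg_le_of_mul_one_add_sum_le hc (by linarith) hdr (hbound n))
    (((summable_one_add_nat_rpow_neg hr).prod_fin_pi (fun _ => by positivity) d).mul_left
      (c ^ (-α.re) * Real.exp (π * |α.im|)))

theorem barnes_zeta_abs_summable (d : ℕ) (hd : 1 ≤ d) (θ : ℝ) (a : ℂ) (w : Fin d → ℂ)
    (ha : 0 < (Complex.exp (-(θ : ℂ) * Complex.I) * a).re)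
    (hw : ∀ i, 0 < (Complex.exp (-(θ : ℂ) * Complex.I) * w i).re)
    (α : ℂ) (hα : (d : ℝ) < α.re) :
    (∀ n : Fin d → ℕ, a + ∑ i, (n i : ℂ) * w i ≠ 0) ∧
    Summable (fun n : Fin d → ℕ => ‖(a + ∑ i, (n i : ℂ) * w i) ^ (-α)‖) :=
  barnes_zeta_abs_summable_general d θ a w ha hw α hα
end

section
/- Let d ≥ 1, let u : ℕ_0^d → ℂ be any function, and let k be a non-negative integer. Let S_k = {n ∈ ℕ_0^d : max{n_1,…,n_d} = k} (the k-th hyper-cubic shell, a finite set). Then Σ_{n ∈ S_k} Σ_{S⊆{1,…,d}} (−1)^{d−|S|} u(n + 𝟙_S) = Σ_{S⊆{1,…,d}} (−1)^{d−|S|} [u((k+1)·𝟙_S) − u(k·𝟙_S)], where 𝟙_S ∈ ℕ_0^d is the 0/1 vector with support S. -/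
open Finset

private theorem signA (d : ℕ) (a b : Fin d → ℂ) :
    ∑ S : Finset (Fin d), (-1:ℂ)^(d - S.card) * ∏ i, (if i ∈ S then a i else b i)
      = ∏ i, (a i - b i) := by
  have h : ∀ i : Fin d, a i - b i = a i + (-(b i)) := fun i => by ring
  simp_rw [h]
  rw [Finset.prod_add, ← Finset.powerset_univ]
  refine Finset.sum_congr rfl fun S hS => ?_
  rw [Finset.prod_ite]
  have h1 : Finset.univ.filter (fun x => x ∈ S) = S := by ext x; simp
  have h2 : Finset.univ.filter (fun x => ¬ x ∈ S) = Finset.univ \ S := by ext x; simp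
  rw [h1, h2]
  rw [show (∏ i ∈ Finset.univ \ S, -b i) = (-1)^(Finset.univ \ S).card * ∏ i ∈ Finset.univ \ S, b i by rw [← Finset.prod_const, ← Finset.prod_mul_distrib]; exact Finset.prod_congr rfl fun i _ => by ring]
  have h3 : (Finset.univ \ S).card = d - S.card := by
    rw [Finset.card_sdiff_of_subset (Finset.subset_univ S)]; simp
  rw [h3]; ring

private theorem point_eval (d : ℕ) (u : (Fin d → ℕ) → ℂ) (t : Fin d → Finset ℕ)
    (c : Fin d → ℕ) (hc : ∀ i, c i ∈ t i) :
    ∑ v ∈ Fintype.piFinset t, (∏ i, if v i = c i then (1:ℂ) else 0) * u v = u c := by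
  rw [Finset.sum_eq_single c]
  · simp
  · intro v hv hvc
    have : ∃ i, v i ≠ c i := by
      by_contra h; push_neg at h; exact hvc (funext h)
    obtain ⟨i, hi⟩ := this
    rw [Finset.prod_eq_zero (Finset.mem_univ i) (by simp [hi]), zero_mul]
  · intro h; exact absurd (by simpa [Fintype.mem_piFinset] using hc) h

private theorem indicator_sum (d : ℕ) (u : (Fin d → ℕ) → ℂ) (s t : Fin d → Finset ℕ)
    (hst : ∀ i, s i ⊆ t i) :
    ∑ v ∈ Fintype.piFinset t, (∏ i, if v i ∈ s i then (1:ℂ) else 0) * u v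
      = ∑ v ∈ Fintype.piFinset s, u v := by
  have h : ∀ v : Fin d → ℕ,
      (∏ i, if v i ∈ s i then (1:ℂ) else 0) * u v
        = if (∀ i, v i ∈ s i) then u v else 0 := by
    intro v
    rw [Finset.prod_boole]
    by_cases hv : ∀ i, v i ∈ s i <;> simp [hv]
  simp_rw [h]
  rw [← Finset.sum_filter]
  refine Finset.sum_congr ?_ fun _ _ => rfl
  ext v
  simp only [Finset.mem_filter, Fintype.mem_piFinset]
  exact ⟨fun ⟨_, h2⟩ => h2, fun h2 => ⟨fun i => hst i (h2 i), h2⟩⟩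

private theorem reindex (d m : ℕ) (u : (Fin d → ℕ) → ℂ) (e : Fin d → ℕ) :
    ∑ n ∈ Fintype.piFinset (fun _ : Fin d => Finset.range m), u (fun i => n i + e i)
      = ∑ v ∈ Fintype.piFinset (fun i => Finset.Ico (e i) (m + e i)), u v := by
  refine Finset.sum_nbij' (fun n => fun i => n i + e i) (fun v => fun i => v i - e i)
    ?_ ?_ ?_ ?_ ?_
  · intro n hn
    simp only [Fintype.mem_piFinset, Finset.mem_Ico] at *
    intro i; have := hn i; rw [Finset.mem_range] at this; omega
  · intro v hv
    simp only [Fintype.mem_piFinset, Finset.mem_Ico, Finset.mem_range] at *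
    intro i; have := hv i; omega
  · intro n hn; funext i; simp
  · intro v hv; funext i
    simp only [Fintype.mem_piFinset, Finset.mem_Ico] at hv
    exact Nat.sub_add_cancel (hv i).1
  · intro n hn; rfl

private theorem cube_sum (d m : ℕ) (u : (Fin d → ℕ) → ℂ) :
    ∑ n ∈ Fintype.piFinset (fun _ : Fin d => Finset.range m),
      ∑ S : Finset (Fin d), (-1:ℂ)^(d - S.card) * u (fun i => n i + if i ∈ S then 1 else 0)
    = ∑ S : Finset (Fin d), (-1:ℂ)^(d - S.card) * u (fun i => if i ∈ S then m else 0) := by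
  rw [Finset.sum_comm]
  have step1 : ∀ S : Finset (Fin d),
      ∑ n ∈ Fintype.piFinset (fun _ : Fin d => Finset.range m),
        u (fun i => n i + if i ∈ S then 1 else 0)
      = ∑ v ∈ Fintype.piFinset (fun _ : Fin d => Finset.range (m+1)),
          (∏ i, if v i ∈ Finset.Ico (if i ∈ S then 1 else 0)
              (m + if i ∈ S then 1 else 0) then (1:ℂ) else 0) * u v := by
    intro S
    rw [reindex d m u (fun i => if i ∈ S then 1 else 0)]
    rw [indicator_sum d u (fun i => Finset.Ico (if i ∈ S then 1 else 0)
        (m + if i ∈ S then 1 else 0)) (fun _ => Finset.range (m+1)) (fun i => ?_)]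
    intro x hx
    simp only [Finset.mem_Ico, Finset.mem_range] at *
    split_ifs at hx ⊢ <;> omega
  calc
    ∑ S : Finset (Fin d), ∑ n ∈ Fintype.piFinset (fun _ : Fin d => Finset.range m),
        (-1:ℂ)^(d - S.card) * u (fun i => n i + if i ∈ S then 1 else 0)
      = ∑ S : Finset (Fin d), (-1:ℂ)^(d - S.card) *
          ∑ v ∈ Fintype.piFinset (fun _ : Fin d => Finset.range (m+1)),
            (∏ i, if v i ∈ Finset.Ico (if i ∈ S then 1 else 0)
                (m + if i ∈ S then 1 else 0) then (1:ℂ) else 0) * u v := by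
        refine Finset.sum_congr rfl fun S _ => ?_
        rw [← Finset.mul_sum, step1 S]
    _ = ∑ v ∈ Fintype.piFinset (fun _ : Fin d => Finset.range (m+1)),
          (∑ S : Finset (Fin d), (-1:ℂ)^(d - S.card) *
            ∏ i, (if i ∈ S then (if v i ∈ Finset.Ico 1 (m+1) then (1:ℂ) else 0)
                  else (if v i ∈ Finset.Ico 0 m then (1:ℂ) else 0))) * u v := by
        simp_rw [Finset.mul_sum]
        rw [Finset.sum_comm]
        refine Finset.sum_congr rfl fun v _ => ?_
        rw [Finset.sum_mul]
        refine Finset.sum_congr rfl fun S _ => ?_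
        have hPQ : (∏ i, if v i ∈ Finset.Ico (if i ∈ S then 1 else 0)
              (m + if i ∈ S then 1 else 0) then (1:ℂ) else 0)
            = ∏ i, (if i ∈ S then (if v i ∈ Finset.Ico 1 (m+1) then (1:ℂ) else 0)
                  else (if v i ∈ Finset.Ico 0 m then (1:ℂ) else 0)) := by
          refine Finset.prod_congr rfl fun i _ => ?_
          by_cases hiS : i ∈ S <;> simp [hiS]
        rw [hPQ]; ring
    _ = ∑ v ∈ Fintype.piFinset (fun _ : Fin d => Finset.range (m+1)),
          (∑ S : Finset (Fin d), (-1:ℂ)^(d - S.card) *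
            ∏ i, (if v i = (if i ∈ S then m else 0) then (1:ℂ) else 0)) * u v := by
        refine Finset.sum_congr rfl fun v hv => ?_
        congr 1
        rw [signA, show (∏ i, ((if v i ∈ Finset.Ico 1 (m+1) then (1:ℂ) else 0)
            - (if v i ∈ Finset.Ico 0 m then (1:ℂ) else 0)))
          = ∏ i, ((if v i = m then (1:ℂ) else 0) - (if v i = 0 then (1:ℂ) else 0)) from ?_,
          ← signA]
        · refine Finset.sum_congr rfl fun S _ => ?_
          congr 1
          refine Finset.prod_congr rfl fun i _ => ?_
          by_cases hiS : i ∈ S <;> simp [hiS]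
        · simp only [Fintype.mem_piFinset, Finset.mem_range] at hv
          refine Finset.prod_congr rfl fun i _ => ?_
          have hvi : v i < m + 1 := hv i
          simp only [Finset.mem_Ico]
          split_ifs <;> first | ring1 | (exfalso; omega)
    _ = ∑ S : Finset (Fin d), (-1:ℂ)^(d - S.card) * u (fun i => if i ∈ S then m else 0) := by
        simp_rw [Finset.sum_mul]
        rw [Finset.sum_comm]
        refine Finset.sum_congr rfl fun S _ => ?_
        simp_rw [mul_assoc, ← Finset.mul_sum]
        congr 1
        exact point_eval d u _ (fun i => if i ∈ S then m else 0)
          (fun i => by by_cases hiS : i ∈ S <;> simp [hiS])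

/-- Shell-by-shell telescoping:
`∑_{n ∈ S_k} [u(n)]_𝟙 = [u(0)]_{(k+1)𝟙} − [u(0)]_{k𝟙}`, where `S_k` is the `k`-th
hyper-cubic shell `{n : max nᵢ = k}`. -/
theorem shell_telescoping (d : ℕ) (hd : 1 ≤ d) (u : (Fin d → ℕ) → ℂ) (k : ℕ) :
    ∑ n ∈ (Fintype.piFinset (fun _ : Fin d => Finset.range (k + 1))).filter
        (fun n => Finset.univ.sup n = k),
      ∑ S : Finset (Fin d), (-1 : ℂ) ^ (d - S.card) *
        u (fun i => n i + if i ∈ S then 1 else 0)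
    = ∑ S : Finset (Fin d), (-1 : ℂ) ^ (d - S.card) *
        (u (fun i => if i ∈ S then k + 1 else 0) - u (fun i => if i ∈ S then k else 0)) := by
  have hi : Nonempty (Fin d) := ⟨⟨0, hd⟩⟩
  set F : (Fin d → ℕ) → ℂ := fun n =>
    ∑ S : Finset (Fin d), (-1 : ℂ) ^ (d - S.card) *
      u (fun i => n i + if i ∈ S then 1 else 0) with hF
  have hsplit :
      ∑ n ∈ (Fintype.piFinset (fun _ : Fin d => Finset.range (k + 1))).filter
          (fun n => Finset.univ.sup n = k), F n
        + ∑ n ∈ Fintype.piFinset (fun _ : Fin d => Finset.range k), F n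
      = ∑ n ∈ Fintype.piFinset (fun _ : Fin d => Finset.range (k + 1)), F n := by
    have hcompl : (Fintype.piFinset (fun _ : Fin d => Finset.range (k + 1))).filter
        (fun n => ¬ Finset.univ.sup n = k) = Fintype.piFinset (fun _ : Fin d => Finset.range k) := by
      ext n
      simp only [Finset.mem_filter, Fintype.mem_piFinset, Finset.mem_range]
      constructor
      · rintro ⟨h1, h2⟩ i
        have hle : Finset.univ.sup n ≤ k := Finset.sup_le fun j _ => Nat.lt_succ_iff.mp (h1 j)
        have hlt : Finset.univ.sup n < k := lt_of_le_of_ne hle h2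
        exact lt_of_le_of_lt (Finset.le_sup (Finset.mem_univ i)) hlt
      · intro h
        refine ⟨fun i => Nat.lt_succ_of_lt (h i), ?_⟩
        have : Finset.univ.sup n < k := by
          obtain ⟨i⟩ := hi
          exact (Finset.sup_lt_iff (lt_of_le_of_lt (Nat.zero_le _) (h i))).mpr
            fun j _ => h j
        omega
    rw [← hcompl]
    exact Finset.sum_filter_add_sum_filter_not _ _ F
  have h1 := cube_sum d (k + 1) u
  have h2 := cube_sum d k u
  have : ∑ n ∈ (Fintype.piFinset (fun _ : Fin d => Finset.range (k + 1))).filter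
      (fun n => Finset.univ.sup n = k), F n
      = ∑ S : Finset (Fin d), (-1 : ℂ) ^ (d - S.card) *
          u (fun i => if i ∈ S then k + 1 else 0)
        - ∑ S : Finset (Fin d), (-1 : ℂ) ^ (d - S.card) *
          u (fun i => if i ∈ S then k else 0) := by
    rw [← h1, ← h2, ← hsplit]
    ring
  rw [this, ← Finset.sum_sub_distrib]
  exact Finset.sum_congr rfl fun S _ => by ring
end

section
/- For every real a > 0, log Γ(a) = a(log a − 1) + (1/2)·log(2π/a) + Σ_{n=0}^∞ [ (a + n + 1/2)·log(1 + 1/(a+n)) − 1 ], where the series on the right converges. -/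
open Real Filter Topology Stirling

/-!
With `h = stirlingLog`, i.e. `h(x) = (x - 1/2) log x - x`, the `n`-th term equals
`h(a+n+1) - h(a+n) - log(a+n)`, so by `log Γ(x+1) = log Γ(x) + log x` the `N`-th partial sum
telescopes to `(log Γ(a) - h(a)) - (log Γ(a+N) - h(a+N))`. Stirling's formula for `Γ`, which
follows from the Euler limit for `Γ(a)` and Stirling's formula for `N!`, says that
`log Γ(a+N) - h(a+N)` tends to `log(2π)/2`. Convergence comes from the `n`-th term being
`O(1/(a+n)^2)`.
-/

lemma abs_inv_add_half_mul_log_one_add_sub_one_le {y : ℝ} (hy0 : 0 < y) (hy : y ≤ 1 / 2) :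
    |(1 / y + 1 / 2) * log (1 + y) - 1| ≤ 3 * y ^ 2 := by
  have hlog : |log (1 + y) - (y - y ^ 2 / 2)| ≤ 2 * y ^ 3 :=
    calc |log (1 + y) - (y - y ^ 2 / 2)|
        = |(∑ i ∈ Finset.range 2, (-y) ^ (i + 1) / (i + 1)) + log (1 - -y)| := by
          simp only [Finset.sum_range_succ, Finset.sum_range_zero, sub_neg_eq_add]
          ring_nf
      _ ≤ |-y| ^ (2 + 1) / (1 - |-y|) :=
          abs_log_sub_add_sum_range_le (by rw [abs_neg, abs_of_pos hy0]; linarith) 2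
      _ = y ^ 3 / (1 - y) := by rw [abs_neg, abs_of_pos hy0]
      _ ≤ 2 * y ^ 3 := by
          rw [div_le_iff₀ (by linarith)]
          nlinarith [pow_pos hy0 3]
  have hmain : |(1 + y / 2) * log (1 + y) - y| ≤ 3 * y ^ 3 := by
    obtain ⟨hlo, hhi⟩ := abs_le.mp hlog
    rw [abs_le]
    constructor <;> nlinarith [pow_pos hy0 3]
  have hscale : (1 / y + 1 / 2) * log (1 + y) - 1 = ((1 + y / 2) * log (1 + y) - y) / y := by
    field_simp
  rw [hscale, abs_div, abs_of_pos hy0, div_le_iff₀ hy0]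
  linarith

lemma abs_add_half_mul_log_one_add_inv_sub_one_le {x : ℝ} (hx : 2 ≤ x) :
    |(x + 1 / 2) * log (1 + 1 / x) - 1| ≤ 3 / x ^ 2 := by
  have h := abs_inv_add_half_mul_log_one_add_sub_one_le (y := 1 / x) (by positivity)
    (by rw [div_le_div_iff₀ (by linarith) two_pos]; linarith)
  rwa [one_div_one_div, div_pow, one_pow, mul_one_div] at h

lemma summable_add_half_mul_log_one_add_inv_sub_one (a : ℝ) :
    Summable (fun n : ℕ => (a + n + 1 / 2) * log (1 + 1 / (a + n)) - 1) := by
  have hg : Summable (fun n : ℕ => 3 * (1 / |n + a| ^ (2 : ℝ))) :=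
    ((summable_one_div_nat_add_rpow a 2).mpr one_lt_two).mul_left 3
  refine hg.of_norm_bounded_eventually_nat ?_
  filter_upwards [eventually_ge_atTop ⌈2 - a⌉₊] with n hn
  have hx : 2 ≤ a + n := by linarith [Nat.ceil_le.mp hn]
  rw [norm_eq_abs, rpow_two, sq_abs, add_comm (n : ℝ), mul_one_div]
  exact abs_add_half_mul_log_one_add_inv_sub_one_le hx

noncomputable def stirlingLog (x : ℝ) : ℝ := (x - 1 / 2) * log x - x

lemma add_half_mul_log_one_add_inv_sub_one_eq {x : ℝ} (hx : 0 < x) :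
    (x + 1 / 2) * log (1 + 1 / x) - 1 = stirlingLog (x + 1) - stirlingLog x - log x := by
  have hlog : log (1 + 1 / x) = log (x + 1) - log x := by
    rw [← log_div (by positivity) hx.ne', add_div, div_self hx.ne', add_comm]
  rw [hlog, stirlingLog, stirlingLog]
  ring

lemma log_Gamma_add_nat {x : ℝ} (hx : 0 < x) (n : ℕ) :
    log (Gamma (x + n)) = log (Gamma x) + ∑ m ∈ Finset.range n, log (x + m) :=
  BohrMollerup.f_add_nat_eq (f := log ∘ Gamma)
    (fun hy => by simp only [Function.comp_apply, Gamma_add_one hy.ne',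
      log_mul hy.ne' (Gamma_pos_of_pos hy).ne', add_comm]) hx n

lemma log_Gamma_add_nat_sub_stirlingLog_eq {a : ℝ} (ha : 0 < a) {N : ℕ} (hN : N ≠ 0) :
    log (Gamma (a + N)) - stirlingLog (a + N) = log (Gamma a) - BohrMollerup.logGammaSeq a N
      + log (stirlingSeq N) + log 2 / 2 + a - (a + N + 1 / 2) * log (1 + a / N) := by
  have hN0 : (0 : ℝ) < N := by positivity
  have hlog : log (1 + a / N) = log (a + N) - log N := by
    rw [← log_div (by positivity) hN0.ne', add_div, div_self hN0.ne', add_comm]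
  rw [log_Gamma_add_nat ha, BohrMollerup.logGammaSeq, log_stirlingSeq_formula,
    Finset.sum_range_succ, hlog, stirlingLog, log_mul two_ne_zero hN0.ne',
    log_div hN0.ne' (exp_pos 1).ne', log_exp]
  ring

lemma tendsto_log_stirlingSeq : Tendsto (fun n => log (stirlingSeq n)) atTop (𝓝 (log π / 2)) := by
  simpa [log_sqrt pi_pos.le] using tendsto_stirlingSeq_sqrt_pi.log (by positivity)

lemma tendsto_add_nat_add_half_mul_log_one_add_div (a : ℝ) :
    Tendsto (fun N : ℕ => (a + N + 1 / 2) * log (1 + a / N)) atTop (𝓝 a) := by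
  have hmain : Tendsto (fun N : ℕ => (N : ℝ) * log (1 + a / N)) atTop (𝓝 a) :=
    (tendsto_mul_log_one_add_div_atTop a).comp tendsto_natCast_atTop_atTop
  have hlog : Tendsto (fun N : ℕ => log (1 + a / N)) atTop (𝓝 0) := by
    simpa using ((tendsto_const_div_atTop_nhds_zero_nat a).const_add 1).log (by simp)
  have h := hmain.add (hlog.const_mul (a + 1 / 2))
  rw [mul_zero, add_zero] at h
  exact h.congr fun N => by ring

lemma tendsto_log_Gamma_add_nat_sub_stirlingLog {a : ℝ} (ha : 0 < a) :
    Tendsto (fun N : ℕ => log (Gamma (a + N)) - stirlingLog (a + N)) atTop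
      (𝓝 (log (2 * π) / 2)) := by
  have hlim := ((((tendsto_const_nhds (x := log (Gamma a))).sub
    (BohrMollerup.tendsto_log_gamma ha)).add tendsto_log_stirlingSeq).add
    (tendsto_const_nhds (x := log 2 / 2 + a))).sub (tendsto_add_nat_add_half_mul_log_one_add_div a)
  rw [log_mul two_ne_zero pi_ne_zero]
  convert hlim.congr' ?_ using 2
  · ring
  · filter_upwards [eventually_ne_atTop 0] with N hN
    rw [log_Gamma_add_nat_sub_stirlingLog_eq ha hN]
    ring

lemma sum_range_add_half_mul_log_one_add_inv_sub_one {a : ℝ} (ha : 0 < a) (N : ℕ) :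
    ∑ n ∈ Finset.range N, ((a + n + 1 / 2) * log (1 + 1 / (a + n)) - 1)
      = (log (Gamma a) - stirlingLog a) - (log (Gamma (a + N)) - stirlingLog (a + N)) := by
  have hterm : ∀ n ∈ Finset.range N, (a + n + 1 / 2) * log (1 + 1 / (a + n)) - 1
      = stirlingLog (a + ↑(n + 1)) - stirlingLog (a + n) - log (a + n) := fun n _ => by
    rw [add_half_mul_log_one_add_inv_sub_one_eq (by positivity), Nat.cast_succ, add_assoc]
  rw [Finset.sum_congr rfl hterm, Finset.sum_sub_distrib,
    Finset.sum_range_sub (fun n : ℕ => stirlingLog (a + n)), log_Gamma_add_nat ha, Nat.cast_zero,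
    add_zero]
  ring

lemma hasSum_add_half_mul_log_one_add_inv_sub_one {a : ℝ} (ha : 0 < a) :
    HasSum (fun n : ℕ => (a + n + 1 / 2) * log (1 + 1 / (a + n)) - 1)
      (log (Gamma a) - stirlingLog a - log (2 * π) / 2) := by
  rw [(summable_add_half_mul_log_one_add_inv_sub_one a).hasSum_iff_tendsto_nat]
  simp_rw [sum_range_add_half_mul_log_one_add_inv_sub_one ha]
  exact tendsto_const_nhds.sub (tendsto_log_Gamma_add_nat_sub_stirlingLog ha)

/-- Series representation of `log Γ(a)` for real `a > 0`. -/
theorem logGamma_series (a : ℝ) (ha : 0 < a) :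
    Summable (fun n : ℕ => (a + n + 1/2) * Real.log (1 + 1/(a + n)) - 1) ∧
    Real.log (Real.Gamma a)
      = a * (Real.log a - 1) + (1/2) * Real.log (2 * Real.pi / a)
        + ∑' n : ℕ, ((a + n + 1/2) * Real.log (1 + 1/(a + n)) - 1) := by
  have h := hasSum_add_half_mul_log_one_add_inv_sub_one ha
  refine ⟨h.summable, ?_⟩
  rw [h.tsum_eq, stirlingLog, log_div (by positivity) ha.ne']
  ring
end

section
/- For every real a > 0, log Γ(a) = (1/2)·log(2π) − a + lim_{M→∞} [ −M + (a + M − 1/2)·log(a + M) − Σ_{n=0}^{M−1} log(a+n) ]; that is, the sequence M ↦ −M + (a+M−1/2)log(a+M) − Σ_{n=0}^{M−1} log(a+n) converges to log Γ(a) − (1/2)log(2π) + a as M → ∞. -/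
/-!
Euler's limit `Γ(a) = lim M^a M! / ∏_{j ≤ M} (a + j)` together with Stirling's formula
`log M! = (M + 1/2) log M - M + (1/2) log 2π + o(1)` rewrites the sequence, up to `o(1)`, as
`log Γ(a) - (1/2) log 2π + (a + M + 1/2) log (1 + a / M)`, and the last term tends to `a`.
-/

open Real Filter Topology

open scoped Nat

theorem tendsto_add_mul_log_one_add_div (x c : ℝ) :
    Tendsto (fun n : ℕ => (n + c) * log (1 + x / n)) atTop (𝓝 x) := by
  have hlog : Tendsto (fun n : ℕ => log (1 + x / n)) atTop (𝓝 0) := by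
    have : Tendsto (fun n : ℕ => 1 + x / n) atTop (𝓝 1) := by
      simpa using tendsto_const_nhds.add
        (tendsto_const_nhds.div_atTop (tendsto_natCast_atTop_atTop (R := ℝ)))
    simpa using this.log one_ne_zero
  simpa [add_mul] using
    ((tendsto_mul_log_one_add_div_atTop x).comp tendsto_natCast_atTop_atTop).add
      (hlog.const_mul c)

theorem Stirling.tendsto_log_factorial_sub :
    Tendsto (fun n : ℕ => log n ! - ((n + 1 / 2) * log n - n)) atTop
      (𝓝 (1 / 2 * log (2 * π))) := by
  have hlim : log √π + 1 / 2 * log 2 = 1 / 2 * log (2 * π) := by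
    rw [log_sqrt pi_pos.le, log_mul two_ne_zero pi_ne_zero]
    ring
  rw [← hlim]
  refine ((tendsto_stirlingSeq_sqrt_pi.log (by positivity)).add_const _).congr' ?_
  filter_upwards [eventually_ne_atTop 0] with n hn
  have hn : (n : ℝ) ≠ 0 := Nat.cast_ne_zero.mpr hn
  rw [log_stirlingSeq_formula, log_mul two_ne_zero hn, log_div hn (exp_ne_zero 1), log_exp]
  ring

theorem Real.log_GammaSeq {s : ℝ} (hs : 0 < s) {n : ℕ} (hn : n ≠ 0) :
    log (GammaSeq s n) = s * log n + log n ! - ∑ j ∈ Finset.range (n + 1), log (s + j) := by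
  have hn : (0 : ℝ) < n := by positivity
  have hprod : 0 < ∏ j ∈ Finset.range (n + 1), (s + j) :=
    Finset.prod_pos fun j _ => by positivity
  rw [GammaSeq, log_div (by positivity) hprod.ne', log_mul (by positivity) (by positivity),
    log_rpow hn, log_prod fun j _ => by positivity]

/-- Limit representation of `log Γ(a)` for real `a > 0`. -/
theorem logGamma_limit (a : ℝ) (ha : 0 < a) :
    Tendsto (fun M : ℕ =>
        -(M : ℝ) + (a + M - 1/2) * Real.log (a + M) - ∑ n ∈ Finset.range M, Real.log (a + n))
      atTop (nhds (Real.log (Real.Gamma a) - (1/2) * Real.log (2 * Real.pi) + a)) := by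
  have hlim := (((GammaSeq_tendsto_Gamma a).log (Gamma_pos_of_pos ha).ne').sub
    Stirling.tendsto_log_factorial_sub).add (tendsto_add_mul_log_one_add_div a (a + 1 / 2))
  refine hlim.congr' ?_
  filter_upwards [eventually_ne_atTop 0] with M hM
  have hM_pos : (0 : ℝ) < M := by positivity
  rw [log_GammaSeq ha hM, Finset.sum_range_succ, one_add_div hM_pos.ne',
    log_div (by positivity) hM_pos.ne', add_comm (M : ℝ) a]
  ring
end

section
/- For every real a > 1, log Γ(a) = a(log a − 1) + (1/2)·log(2π/a) + Σ_{k=2}^∞ [ ((−1)^k (k−1)) / (2k(k+1)) ] · Σ_{n=0}^∞ (a+n)^{−k}, where the inner series Σ_{n=0}^∞ (a+n)^{−k} is the Hurwitz zeta value ζ_H(k,a) and the outer series converges. -/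
/-!
Write `g x = (x + 1/2) * (log (x + 1) - log x) - 1` and `S x = (x - 1/2) * log x - x`, so that
`S (x + 1) = S x + log x + g x`. Telescoping turns Gauss's limit formula for `log Γ` into
`log Γ(a) = S a + log (2π) / 2 + ∑ₘ g (a + m)`, the constant coming from Stirling's formula
for `n!`. Expanding `log (1 + 1/x)` in powers of `1/x` gives `g x = ∑ₖ cₖ / x^(k+2)` with
`|cₖ| ≤ 1`; for `a > 1` the double series `∑ₘ ∑ₖ cₖ / (a + m)^(k+2)` converges absolutely,
and summing it over `m` first gives the Hurwitz zeta values.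
-/
open Real Filter Topology
open scoped Nat

noncomputable def binetCoeff (k : ℕ) : ℝ :=
  ((-1 : ℝ) ^ (k + 2) * ((k : ℝ) + 2 - 1)) / (2 * ((k : ℝ) + 2) * (((k : ℝ) + 2) + 1))

noncomputable def binetTerm (x : ℝ) : ℝ := (x + 1 / 2) * (log (x + 1) - log x) - 1

lemma hasSum_binetCoeff_mul_pow {y : ℝ} (hy : |y| < 1) :
    HasSum (fun k => binetCoeff k * y ^ (k + 3)) ((1 + y / 2) * log (1 + y) - y) := by
  have hlog : HasSum (fun n : ℕ => (-1) ^ n * y ^ (n + 1) / (n + 1)) (log (1 + y)) := by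
    have := (hasSum_pow_div_log_of_abs_lt_one (x := -y) (by rwa [abs_neg])).neg
    rw [neg_neg, sub_neg_eq_add] at this
    exact this.congr_fun fun n => by rw [neg_pow]; ring
  -- dropping the first term of `log (1 + y)` makes the zeroth term of the combined series vanish
  have key : HasSum (fun k => binetCoeff k * y ^ (k + 3)) _ :=
    ((hasSum_nat_add_iff' 1).mpr (((hasSum_nat_add_iff' 1).mpr hlog).add
      (hlog.mul_left (y / 2)))).congr_fun fun k => by
        simp only [binetCoeff]
        push_cast
        field_simp
        ring
  convert key using 1
  simp only [Finset.sum_range_one]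
  push_cast
  ring

lemma hasSum_binetTerm {x : ℝ} (hx : 1 < |x|) :
    HasSum (fun k => binetCoeff k * (1 / x ^ (k + 2))) (binetTerm x) := by
  have hx0 : x ≠ 0 := by rintro rfl; norm_num at hx
  have hx1 : x + 1 ≠ 0 := by
    intro h; rw [show x = -1 by linarith] at hx; norm_num at hx
  have hinv : |x⁻¹| < 1 := by rw [abs_inv]; exact inv_lt_one_of_one_lt₀ hx
  have hlog : log (x + 1) - log x = log (1 + x⁻¹) := by
    rw [← log_div hx1 hx0]
    congr 1
    field_simp
  have key : HasSum (fun k => binetCoeff k * (1 / x ^ (k + 2))) _ :=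
    ((hasSum_binetCoeff_mul_pow (y := x⁻¹) hinv).mul_left x).congr_fun fun k => by
      rw [inv_pow, pow_succ]
      field_simp
      ring
  convert key using 1
  rw [binetTerm, hlog]
  field_simp

noncomputable def stirlingMainTerm (x : ℝ) : ℝ := (x - 1 / 2) * log x - x

lemma stirlingMainTerm_add_one (x : ℝ) :
    stirlingMainTerm (x + 1) = stirlingMainTerm x + log x + binetTerm x := by
  simp only [stirlingMainTerm, binetTerm]
  ring

lemma sum_range_log_add (a : ℝ) (N : ℕ) :
    ∑ m ∈ Finset.range N, log (a + m) =
      stirlingMainTerm (a + N) - stirlingMainTerm a - ∑ m ∈ Finset.range N, binetTerm (a + m) := by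
  induction N with
  | zero => simp
  | succ N ih =>
    rw [Finset.sum_range_succ, Finset.sum_range_succ, ih, Nat.cast_succ, ← add_assoc,
      stirlingMainTerm_add_one]
    ring

lemma tendsto_log_factorial_add_mul_log_sub_stirlingMainTerm (a : ℝ) :
    Tendsto (fun n : ℕ => log n ! + a * log n - stirlingMainTerm (a + n + 1)) atTop
      (𝓝 (log (2 * π) / 2)) := by
  have hrewrite : ∀ᶠ n : ℕ in atTop,
      log (Stirling.stirlingSeq n) + log 2 / 2 + (a + 1) - (a + n + 1 / 2) * log (1 + (a + 1) / n)
        = log n ! + a * log n - stirlingMainTerm (a + n + 1) := by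
    filter_upwards [eventually_gt_atTop 0,
      tendsto_natCast_atTop_atTop.eventually_gt_atTop (-a - 1)] with n hn hna
    have hn0 : (n : ℝ) ≠ 0 := by positivity
    have hratio : 1 + (a + 1) / n = (a + n + 1) / n := by field_simp; ring
    rw [Stirling.log_stirlingSeq_formula, hratio, log_div (by linarith) hn0,
      log_mul two_ne_zero hn0, log_div hn0 (exp_ne_zero 1), log_exp, stirlingMainTerm]
    ring
  have hstirling : Tendsto (fun n : ℕ => log (Stirling.stirlingSeq n)) atTop (𝓝 (log √π)) :=
    Stirling.tendsto_stirlingSeq_sqrt_pi.log (sqrt_pos.mpr pi_pos).ne'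
  have hlog_ratio : Tendsto (fun n : ℕ => (a + n + 1 / 2) * log (1 + (a + 1) / n)) atTop
      (𝓝 (a + 1)) := by
    have hsmall : Tendsto (fun n : ℕ => log (1 + (a + 1) / n)) atTop (𝓝 0) := by
      simpa using ((tendsto_const_div_atTop_nhds_zero_nat (a + 1)).const_add 1).log
        (by norm_num : (1 : ℝ) + 0 ≠ 0)
    have hmain := (tendsto_mul_log_one_add_div_atTop (a + 1)).comp tendsto_natCast_atTop_atTop
    have hsum := hmain.add (hsmall.const_mul (a + 1 / 2))
    rw [mul_zero, add_zero] at hsum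
    refine hsum.congr fun n => ?_
    simp only [Function.comp_apply]
    ring
  have hlim := ((hstirling.add_const (log 2 / 2)).add_const (a + 1)).sub hlog_ratio
  rw [log_sqrt pi_pos.le] at hlim
  rw [log_mul two_ne_zero pi_pos.ne']
  convert hlim.congr' hrewrite using 2
  ring

lemma tendsto_sum_binetTerm {a : ℝ} (ha : 0 < a) :
    Tendsto (fun N => ∑ m ∈ Finset.range N, binetTerm (a + m)) atTop
      (𝓝 (log (Gamma a) - stirlingMainTerm a - log (2 * π) / 2)) := by
  rw [← tendsto_add_atTop_iff_nat 1]
  have hgauss := (BohrMollerup.tendsto_log_gamma ha).sub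
    ((tendsto_log_factorial_add_mul_log_sub_stirlingMainTerm a).add_const (stirlingMainTerm a))
  convert hgauss using 2 with n
  · rw [BohrMollerup.logGammaSeq, sum_range_log_add, Nat.cast_succ, ← add_assoc]
    ring
  · ring

lemma abs_binetCoeff_le_one (k : ℕ) : |binetCoeff k| ≤ 1 := by
  rw [binetCoeff, abs_div, abs_mul, abs_pow, abs_neg, abs_one, one_pow, one_mul,
    abs_of_nonneg (by linarith [k.cast_nonneg (α := ℝ)]), abs_of_nonneg (by positivity),
    div_le_one (by positivity)]
  nlinarith [k.cast_nonneg (α := ℝ)]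

lemma summable_one_div_add_pow (a : ℝ) {p : ℕ} (hp : 2 ≤ p) :
    Summable (fun n : ℕ => 1 / (a + n) ^ p) := by
  refine Summable.of_norm ?_
  have := (Real.summable_one_div_nat_add_rpow a p).mpr (by exact_mod_cast hp)
  simpa [Real.rpow_natCast, abs_pow, add_comm] using this

lemma summable_mul_one_div_add_pow {c : ℕ → ℝ} {C : ℝ} (hc : ∀ k, |c k| ≤ C) {a : ℝ}
    (ha : 1 < a) : Summable (fun p : ℕ × ℕ => c p.2 * (1 / (a + p.1) ^ (p.2 + 2))) := by
  have hC : 0 ≤ C := (abs_nonneg _).trans (hc 0)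
  have hmajorant : Summable (fun p : ℕ × ℕ => C * (1 / (a + p.1) ^ 2) * (1 / a) ^ p.2) :=
    ((summable_one_div_add_pow a le_rfl).mul_left C).mul_of_nonneg
      (summable_geometric_of_lt_one (by positivity) ((div_lt_one (by positivity)).mpr ha))
      (fun n => by positivity) (fun k => by positivity)
  refine hmajorant.of_norm_bounded fun ⟨n, k⟩ => ?_
  have hpos : 0 < a + n := by positivity
  have hdecay : 1 / (a + n) ^ k ≤ (1 / a) ^ k := by
    rw [← one_div_pow]
    gcongr
    linarith [n.cast_nonneg (α := ℝ)]
  calc ‖c k * (1 / (a + n) ^ (k + 2))‖ = |c k| * (1 / (a + n) ^ 2 * (1 / (a + n) ^ k)) := by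
        rw [norm_mul, Real.norm_eq_abs, Real.norm_of_nonneg (by positivity), pow_add,
          mul_comm (_ ^ k), one_div_mul_one_div]
    _ ≤ C * (1 / (a + n) ^ 2 * (1 / a) ^ k) := by gcongr; exact hc k
    _ = C * (1 / (a + n) ^ 2) * (1 / a) ^ k := by ring

/-- Series representation of `log Γ(a)` in terms of Hurwitz zeta values
`ζ_H(k,a) = ∑_{n≥0} (a+n)^{-k}`, for real `a > 1`. -/
theorem logGamma_hurwitz_series (a : ℝ) (ha : 1 < a) :
    (∀ k : ℕ, Summable (fun n : ℕ => 1 / (a + n) ^ (k + 2))) ∧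
    Summable (fun k : ℕ =>
      ((-1 : ℝ) ^ (k + 2) * ((k : ℝ) + 2 - 1)) / (2 * ((k : ℝ) + 2) * (((k : ℝ) + 2) + 1)) *
        ∑' n : ℕ, 1 / (a + n) ^ (k + 2)) ∧
    Real.log (Real.Gamma a)
      = a * (Real.log a - 1) + (1/2) * Real.log (2 * Real.pi / a)
        + ∑' k : ℕ,
            ((-1 : ℝ) ^ (k + 2) * ((k : ℝ) + 2 - 1)) / (2 * ((k : ℝ) + 2) * (((k : ℝ) + 2) + 1)) *
              ∑' n : ℕ, 1 / (a + n) ^ (k + 2) := by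
  have hdouble := summable_mul_one_div_add_pow abs_binetCoeff_le_one ha
  have hrow (n : ℕ) :
      HasSum (fun k => binetCoeff k * (1 / (a + n) ^ (k + 2))) (binetTerm (a + n)) :=
    hasSum_binetTerm (by rw [abs_of_pos (by positivity)]; linarith [n.cast_nonneg (α := ℝ)])
  have hcol : (fun k => binetCoeff k * ∑' n : ℕ, 1 / (a + n) ^ (k + 2)) =
      fun k => ∑' n : ℕ, binetCoeff k * (1 / (a + n) ^ (k + 2)) :=
    funext fun k => tsum_mul_left.symm
  have hbinet : HasSum (fun n : ℕ => binetTerm (a + n))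
      (∑' k, binetCoeff k * ∑' n : ℕ, 1 / (a + n) ^ (k + 2)) := by
    rw [hcol, hdouble.tsum_comm, ← hdouble.tsum_prod]
    exact hdouble.hasSum.prod_fiberwise hrow
  have hGamma := tendsto_nhds_unique (tendsto_sum_binetTerm (by positivity : 0 < a))
    hbinet.tendsto_sum_nat
  refine ⟨fun k => summable_one_div_add_pow a (by omega), ?_, ?_⟩
  · exact hcol ▸ hdouble.prod_symm.prod
  · change _ = _ + _ + ∑' k, binetCoeff k * _
    rw [← hGamma, stirlingMainTerm, log_div (by positivity) (by positivity)]
    ring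
end

section
/- Let d ≥ 1, let a, w_1,…,w_d ∈ ℂ with Re(a) > 0 and Re(w_i) > 0, let M be a non-negative integer, and let α ∈ ℂ with Re(α) > d − M − 1. Let b : ℕ → ℂ and r > 0 satisfy Σ_{k=0}^∞ b_k z^k/k! = z^d ∏_{i=1}^d w_i/(e^{w_i z} − 1) for all z with 0 < |z| < r. Then the function t ↦ e^{−at} ( t^{α−1} ∏_{i=1}^d (1−e^{−w_i t})^{−1} − (t^{α−d−1}/∏_{i=1}^d w_i) Σ_{k=0}^{M} (−1)^k b_k t^k/k! ) is Lebesgue integrable on (0,∞) (t^{β} denoting the principal power of the positive real t). -/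
/-!
Evaluating the generating function at `z = -t` gives
`t ^ d * (∏ i, w i) * ∏ i, (1 - exp (-w i * t))⁻¹`, so for `t > 0` the bracket in the integrand
is `t ^ (α - d - 1) / ∏ i, w i` times the remainder of the degree-`M` Taylor polynomial of the
generating function at `-t`. The series converges at some `ρ > 0`, so its terms at `z` are
bounded by `A * (‖z‖ / ρ) ^ k`, and the geometric tail bounds that remainder by `C * t ^ (M + 1)`
near `0`; the integrand is then `O(t ^ (Re α - d + M))` with exponent `> -1`. Away from `0` each
term is a power of `t` times a bounded factor times `exp (-a * t)`, integrable since `Re a > 0`.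
-/

open Complex MeasureTheory Set Filter Asymptotics Finset

lemma norm_sub_sum_range_le_of_le_geometric {E : Type*} [SeminormedAddCommGroup E] {u : ℕ → E}
    {S : E} (hu : HasSum u S) {A q : ℝ} (hq : q < 1) (hbound : ∀ k, ‖u k‖ ≤ A * q ^ k) (N : ℕ) :
    ‖S - ∑ k ∈ range N, u k‖ ≤ A * q ^ N / (1 - q) := by
  rw [← dist_eq_norm, dist_comm]
  exact dist_le_of_le_geometric_of_tendsto q A hq
    (fun n => by simpa [dist_eq_norm', sum_range_succ] using hbound n) hu.tendsto_sum_nat N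

lemma exists_norm_sub_sum_range_le_pow {c : ℕ → ℂ} {f : ℂ → ℂ} {r : ℝ} (hr : 0 < r)
    (hf : ∀ z : ℂ, 0 < ‖z‖ → ‖z‖ < r → HasSum (fun k => c k * z ^ k) (f z)) (N : ℕ) :
    ∃ δ > 0, ∃ C, ∀ z : ℂ, 0 < ‖z‖ → ‖z‖ ≤ δ →
      ‖f z - ∑ k ∈ range N, c k * z ^ k‖ ≤ C * ‖z‖ ^ N := by
  obtain ⟨ρ, hρ, hρr⟩ : ∃ ρ, 0 < ρ ∧ ρ < r := ⟨r / 2, half_pos hr, half_lt_self hr⟩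
  have hnorm_ρ : ‖(ρ : ℂ)‖ = ρ := by simp [hρ.le]
  obtain ⟨A, hA⟩ : ∃ A, ∀ k, ‖c k‖ * ρ ^ k ≤ A := by
    have hsum := hf ρ (by rwa [hnorm_ρ]) (by rwa [hnorm_ρ])
    obtain ⟨A, hA⟩ := hsum.summable.tendsto_atTop_zero.norm.bddAbove_range
    exact ⟨A, fun k => by simpa [abs_of_pos hρ] using hA ⟨k, rfl⟩⟩
  refine ⟨ρ / 2, half_pos hρ, 2 * A / ρ ^ N, fun z hz hzδ => ?_⟩
  set q := ‖z‖ / ρ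
  have hq : q ≤ 1 / 2 := by rw [div_le_iff₀ hρ]; linarith
  have hA0 : 0 ≤ A := (by positivity : 0 ≤ ‖c 0‖ * ρ ^ 0).trans (hA 0)
  have hterm : ∀ k, ‖c k * z ^ k‖ ≤ A * q ^ k := fun k => by
    calc ‖c k * z ^ k‖ = ‖c k‖ * ρ ^ k * q ^ k := by
          rw [norm_mul, norm_pow, div_pow]; field_simp
      _ ≤ A * q ^ k := by gcongr; exact hA k
  calc ‖f z - ∑ k ∈ range N, c k * z ^ k‖ ≤ A * q ^ N / (1 - q) :=
        norm_sub_sum_range_le_of_le_geometric (hf z hz (by linarith)) (by linarith) hterm N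
    _ ≤ A * q ^ N / (1 / 2) := by gcongr; linarith
    _ = 2 * A / ρ ^ N * ‖z‖ ^ N := by rw [div_pow]; field_simp

lemma integrableOn_Ioc_of_norm_le_rpow {E : Type*} [NormedAddCommGroup E] {f : ℝ → E}
    {δ β C : ℝ} (hβ : -1 < β) (hf : ContinuousOn f (Ioc 0 δ))
    (hbound : ∀ t ∈ Ioc 0 δ, ‖f t‖ ≤ C * t ^ β) : IntegrableOn f (Ioc 0 δ) :=
  ((intervalIntegral.intervalIntegrable_rpow' hβ).1.const_mul C).mono'
    (hf.aestronglyMeasurable measurableSet_Ioc) (ae_restrict_of_forall_mem measurableSet_Ioc hbound)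

lemma continuousOn_ofReal_cpow_const (s : ℂ) :
    ContinuousOn (fun t : ℝ => (t : ℂ) ^ s) (Ioi 0) := fun _ ht =>
  (continuousAt_ofReal_cpow_const _ _ (Or.inr ht.ne')).continuousWithinAt

lemma integrableOn_Ioi_exp_neg_mul_cpow {a : ℂ} (ha : 0 < a.re) (s : ℂ) {c : ℝ} (hc : 0 < c) :
    IntegrableOn (fun t : ℝ => exp (-a * t) * (t : ℂ) ^ s) (Ioi c) := by
  have hcont : ContinuousOn (fun t : ℝ => exp (-a * t) * (t : ℂ) ^ s) (Ici c) :=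
    ((by fun_prop : Continuous fun t : ℝ => exp (-a * t)).continuousOn.mul
      (continuousOn_ofReal_cpow_const s)).mono (Ici_subset_Ioi.mpr hc)
  refine (integrable_norm_iff ((hcont.mono Ioi_subset_Ici_self).aestronglyMeasurable
    measurableSet_Ioi)).mp (integrable_of_isBigO_exp_neg (half_pos ha) hcont.norm ?_)
  have hnorm : (fun t : ℝ => ‖exp (-a * t) * (t : ℂ) ^ s‖) =ᶠ[atTop]
      fun t => t ^ s.re * Real.exp (-a.re * t) := by
    filter_upwards [eventually_gt_atTop 0] with t ht
    rw [norm_mul, norm_exp, norm_cpow_eq_rpow_re_of_pos ht, mul_comm]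
    simp
  refine hnorm.trans_isBigO (((isLittleO_rpow_exp_pos_mul_atTop s.re (half_pos ha)).isBigO.mul
    (isBigO_refl (fun t => Real.exp (-a.re * t)) atTop)).congr_right fun t => ?_)
  rw [← Real.exp_add]; ring_nf

lemma one_sub_exp_neg_re_mul_le_norm (w : ℂ) (t : ℝ) :
    1 - Real.exp (-w.re * t) ≤ ‖1 - exp (-w * t)‖ := by
  simpa [norm_exp] using norm_sub_norm_le (1 : ℂ) (exp (-w * t))

lemma one_sub_exp_neg_re_mul_pos {w : ℂ} (hw : 0 < w.re) {t : ℝ} (ht : 0 < t) :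
    0 < 1 - Real.exp (-w.re * t) := by
  rw [sub_pos, Real.exp_lt_one_iff]; nlinarith

lemma one_sub_exp_neg_mul_ne_zero {w : ℂ} (hw : 0 < w.re) {t : ℝ} (ht : 0 < t) :
    1 - exp (-w * t) ≠ 0 :=
  norm_pos_iff.mp ((one_sub_exp_neg_re_mul_pos hw ht).trans_le (one_sub_exp_neg_re_mul_le_norm w t))

section

variable {d : ℕ} {w : Fin d → ℂ}

lemma continuousOn_prod_inv_one_sub_exp (hw : ∀ i, 0 < (w i).re) :
    ContinuousOn (fun t : ℝ => ∏ i, (1 - exp (-(w i) * t))⁻¹) (Ioi 0) :=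
  continuousOn_finsetProd _ fun i _ =>
    (by fun_prop : Continuous fun t : ℝ => 1 - exp (-(w i) * t)).continuousOn.inv₀
      fun _ ht => one_sub_exp_neg_mul_ne_zero (hw i) ht

lemma norm_prod_inv_one_sub_exp_le (hw : ∀ i, 0 < (w i).re) {c t : ℝ} (hc : 0 < c) (hct : c ≤ t) :
    ‖∏ i, (1 - exp (-(w i) * t))⁻¹‖ ≤ ∏ i, (1 - Real.exp (-(w i).re * c))⁻¹ := by
  rw [norm_prod]
  refine prod_le_prod (fun i _ => norm_nonneg _) fun i _ => ?_
  rw [norm_inv]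
  refine inv_anti₀ (one_sub_exp_neg_re_mul_pos (hw i) hc) ?_
  calc 1 - Real.exp (-(w i).re * c) ≤ 1 - Real.exp (-(w i).re * t) := by
        have := Real.exp_le_exp.mpr (by nlinarith [hw i] : -(w i).re * t ≤ -(w i).re * c)
        linarith
    _ ≤ ‖1 - exp (-(w i) * t)‖ := one_sub_exp_neg_re_mul_le_norm (w i) t

lemma neg_pow_mul_prod_div_exp_sub_one (z : ℂ) :
    (-z) ^ d * ∏ i, w i / (exp (w i * -z) - 1) =
      z ^ d * (∏ i, w i) * ∏ i, (1 - exp (-(w i) * z))⁻¹ := by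
  have hfactor : ∀ i, w i / (exp (w i * -z) - 1) = -1 * (w i * (1 - exp (-(w i) * z))⁻¹) := by
    intro i
    rw [mul_neg, ← neg_mul, ← neg_sub, div_neg, div_eq_mul_inv]
    ring
  simp only [hfactor, prod_mul_distrib, prod_const, card_univ, Fintype.card_fin, neg_pow z]
  linear_combination (z ^ d * (∏ i, w i) * ∏ i, (1 - exp (-(w i) * z))⁻¹) *
    (by rw [← mul_pow]; norm_num : ((-1 : ℂ)) ^ d * (-1) ^ d = 1)

end

noncomputable def ruijsenaarsIntegrand {d : ℕ} (a : ℂ) (w : Fin d → ℂ) (α : ℂ) (b : ℕ → ℂ)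
    (M : ℕ) (t : ℝ) : ℂ :=
  exp (-a * t) * ((t : ℂ) ^ (α - 1) * ∏ i, (1 - exp (-(w i) * t))⁻¹ -
    (t : ℂ) ^ (α - d - 1) / (∏ i, w i) *
      ∑ k ∈ range (M + 1), (-1 : ℂ) ^ k * b k * (t : ℂ) ^ k / (k.factorial : ℂ))

section

variable {d : ℕ} {a : ℂ} {w : Fin d → ℂ} {α : ℂ} {b : ℕ → ℂ} {M : ℕ}

lemma continuousOn_ruijsenaarsIntegrand (hw : ∀ i, 0 < (w i).re) :
    ContinuousOn (ruijsenaarsIntegrand a w α b M) (Ioi 0) :=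
  (by fun_prop : Continuous fun t : ℝ => exp (-a * t)).continuousOn.mul
    (((continuousOn_ofReal_cpow_const _).mul (continuousOn_prod_inv_one_sub_exp hw)).sub
      (((continuousOn_ofReal_cpow_const _).div_const _).mul (by fun_prop)))

lemma integrableOn_Ioi_ruijsenaarsIntegrand (ha : 0 < a.re) (hw : ∀ i, 0 < (w i).re) {c : ℝ}
    (hc : 0 < c) : IntegrableOn (ruijsenaarsIntegrand a w α b M) (Ioi c) := by
  have hQ := (continuousOn_prod_inv_one_sub_exp hw).mono (Ioi_subset_Ioi hc.le)
  have hmain : IntegrableOn (fun t : ℝ =>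
      exp (-a * t) * ((t : ℂ) ^ (α - 1) * ∏ i, (1 - exp (-(w i) * t))⁻¹)) (Ioi c) := by
    simpa only [mul_assoc, IntegrableOn] using
      (integrableOn_Ioi_exp_neg_mul_cpow ha (α - 1) hc).mul_bdd
        (hQ.aestronglyMeasurable measurableSet_Ioi)
        (ae_restrict_of_forall_mem measurableSet_Ioi fun t ht =>
          norm_prod_inv_one_sub_exp_le hw hc (le_of_lt ht))
  have hterm : ∀ k ∈ range (M + 1), IntegrableOn (fun t : ℝ => exp (-a * t) *
      ((t : ℂ) ^ (α - d - 1) / (∏ i, w i) * ((-1) ^ k * b k * (t : ℂ) ^ k / k.factorial)))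
      (Ioi c) := fun k _ =>
    IntegrableOn.congr_fun ((integrableOn_Ioi_exp_neg_mul_cpow ha (α - d - 1 + k) hc).const_mul
      ((-1) ^ k * b k / ((∏ i, w i) * k.factorial))) (fun t ht => by
        rw [cpow_add _ _ (ofReal_ne_zero.mpr (hc.trans ht).ne'), cpow_natCast]; ring)
      measurableSet_Ioi
  refine (hmain.sub (integrable_finsetSum _ hterm)).congr_fun (fun t _ => ?_) measurableSet_Ioi
  simp only [ruijsenaarsIntegrand, Pi.sub_apply, mul_sub, mul_sum]

lemma norm_ruijsenaarsIntegrand_le (ha : 0 ≤ a.re) (hP : ∏ i, w i ≠ 0) {t C : ℝ} (ht : 0 < t)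
    (hrem : ‖(-(t : ℂ)) ^ d * ∏ i, w i / (exp (w i * -(t : ℂ)) - 1) -
      ∑ k ∈ range (M + 1), b k / k.factorial * (-(t : ℂ)) ^ k‖ ≤ C * t ^ (M + 1)) :
    ‖ruijsenaarsIntegrand a w α b M t‖ ≤ C / ‖∏ i, w i‖ * t ^ (α.re - d + M) := by
  have htne : (t : ℂ) ≠ 0 := ofReal_ne_zero.mpr ht.ne'
  have hsplit : (t : ℂ) ^ (α - 1) = (t : ℂ) ^ (α - d - 1) * (t : ℂ) ^ d := by
    rw [← cpow_natCast, ← cpow_add _ _ htne]; ring_nf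
  have hid : ruijsenaarsIntegrand a w α b M t = exp (-a * t) * ((t : ℂ) ^ (α - d - 1) / (∏ i, w i) *
      ((-(t : ℂ)) ^ d * ∏ i, w i / (exp (w i * -(t : ℂ)) - 1) -
        ∑ k ∈ range (M + 1), b k / k.factorial * (-(t : ℂ)) ^ k)) := by
    have hsum : ∑ k ∈ range (M + 1), b k / k.factorial * (-(t : ℂ)) ^ k =
        ∑ k ∈ range (M + 1), (-1 : ℂ) ^ k * b k * (t : ℂ) ^ k / (k.factorial : ℂ) :=
      sum_congr rfl fun k _ => by rw [neg_pow]; ring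
    rw [neg_pow_mul_prod_div_exp_sub_one, ruijsenaarsIntegrand, hsplit, hsum]
    field_simp
  rw [hid, norm_mul, norm_mul, norm_div, norm_exp, norm_cpow_eq_rpow_re_of_pos ht]
  have hre : (α - d - 1).re = α.re - d - 1 := by simp
  have hexp : Real.exp (-a * t).re ≤ 1 := Real.exp_le_one_iff.mpr (by simp; nlinarith)
  have hpow : t ^ (α.re - d - 1) * t ^ (M + 1) = t ^ (α.re - d + M) := by
    rw [← Real.rpow_natCast, ← Real.rpow_add ht]; push_cast; ring_nf
  calc Real.exp (-a * t).re * (t ^ (α - d - 1).re / ‖∏ i, w i‖ * ‖_‖)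
      ≤ 1 * (t ^ (α.re - d - 1) / ‖∏ i, w i‖ * (C * t ^ (M + 1))) := by rw [hre]; gcongr
    _ = C / ‖∏ i, w i‖ * t ^ (α.re - d + M) := by rw [← hpow]; ring

end

theorem barnes_ruijsenaars_integrable_general (d : ℕ) (a : ℂ) (w : Fin d → ℂ)
    (ha : 0 < a.re) (hw : ∀ i, 0 < (w i).re) (M : ℕ)
    (α : ℂ) (hα : (d : ℝ) - M - 1 < α.re)
    (b : ℕ → ℂ) (r : ℝ) (hr : 0 < r)
    (hb : ∀ z : ℂ, 0 < ‖z‖ → ‖z‖ < r →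
      HasSum (fun k : ℕ => b k * z ^ k / (k.factorial : ℂ))
        (z ^ d * ∏ i, w i / (Complex.exp (w i * z) - 1))) :
    IntegrableOn (fun t : ℝ =>
      Complex.exp (-a * t) *
        ((t : ℂ) ^ (α - 1) * ∏ i, (1 - Complex.exp (-(w i) * t))⁻¹ -
          (t : ℂ) ^ (α - d - 1) / (∏ i, w i) *
            ∑ k ∈ Finset.range (M + 1), (-1 : ℂ) ^ k * b k * (t : ℂ) ^ k / (k.factorial : ℂ)))
      (Ioi 0) := by
  have hP : ∏ i, w i ≠ 0 := prod_ne_zero_iff.mpr fun i _ => ne_zero_of_re_pos (hw i)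
  obtain ⟨δ, hδ, C, hC⟩ := exists_norm_sub_sum_range_le_pow (c := fun k => b k / k.factorial) hr
    (fun z hz hzr => by simpa only [div_mul_eq_mul_div] using hb z hz hzr) (M + 1)
  have hnear : IntegrableOn (ruijsenaarsIntegrand a w α b M) (Ioc 0 δ) := by
    refine integrableOn_Ioc_of_norm_le_rpow (C := C / ‖∏ i, w i‖) (by linarith : -1 < α.re - d + M)
      ((continuousOn_ruijsenaarsIntegrand hw).mono Ioc_subset_Ioi_self) fun t ⟨ht, htδ⟩ => ?_
    have hnorm : ‖-(t : ℂ)‖ = t := by simp [ht.le]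
    refine norm_ruijsenaarsIntegrand_le ha.le hP ht ?_
    simpa only [hnorm] using hC (-t) (by rwa [hnorm]) (by rwa [hnorm])
  rw [← Ioc_union_Ioi_eq_Ioi hδ.le]
  exact hnear.union (integrableOn_Ioi_ruijsenaarsIntegrand ha hw hδ)

/-- Integrability of the subtracted integrand in Ruijsenaars' representation, for
`Re(α) > d − M − 1`. -/
theorem barnes_ruijsenaars_integrable (d : ℕ) (hd : 1 ≤ d) (a : ℂ) (w : Fin d → ℂ)
    (ha : 0 < a.re) (hw : ∀ i, 0 < (w i).re) (M : ℕ)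
    (α : ℂ) (hα : (d : ℝ) - M - 1 < α.re)
    (b : ℕ → ℂ) (r : ℝ) (hr : 0 < r)
    (hb : ∀ z : ℂ, 0 < ‖z‖ → ‖z‖ < r →
      HasSum (fun k : ℕ => b k * z ^ k / (k.factorial : ℂ))
        (z ^ d * ∏ i, w i / (Complex.exp (w i * z) - 1))) :
    IntegrableOn (fun t : ℝ =>
      Complex.exp (-a * t) *
        ((t : ℂ) ^ (α - 1) * ∏ i, (1 - Complex.exp (-(w i) * t))⁻¹ -
          (t : ℂ) ^ (α - d - 1) / (∏ i, w i) *
            ∑ k ∈ Finset.range (M + 1), (-1 : ℂ) ^ k * b k * (t : ℂ) ^ k / (k.factorial : ℂ)))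
      (Ioi 0) :=
  barnes_ruijsenaars_integrable_general d a w ha hw M α hα b r hr hb
end

section
/- Let d ≥ 1, let w_1,…,w_d, c ∈ ℂ with Re(w_i) > 0 and Re(c) > 0, let M be a non-negative integer, and let α ∈ ℂ with Re(α) > d − M − 1. Let b : ℕ → ℂ and r > 0 satisfy Σ_{k=0}^∞ b_k z^k/k! = z^d e^{−cz} ∏_{i=1}^d w_i/(e^{w_i z} − 1) for all z with 0 < |z| < r. Then the function t ↦ t^{α−1} ( ∏_{i=1}^d (1−e^{−w_i t})^{−1} − 1 − (t^{−d} e^{−ct}/∏_{i=1}^d w_i) Σ_{k=0}^{M} (−1)^k b_k t^k/k! + e^{−ct} Σ_{k=0}^{M−d} (ct)^k/k! ) is Lebesgue integrable on (0,∞), where the sum Σ_{k=0}^{M−d} is empty (equal to 0) if M < d and t^{β} denotes the principal power of the positive real t. -/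
/-!
At infinity every term of the bracket `barnesRemainder` decays exponentially, except the constant `1`, which cancels
the limit of the product; so the bracket is `O(t ^ (-a))` for every `a ≥ 0`. Near `0`, the
generating function at `z = -t` turns the bracket into `t ^ (-d) e^(-ct) / ∏ w` times the tail of
`∑ b_k (-t)^k / k!` beyond order `M`, minus `e^(-ct)` times the tail of the exponential series
of `ct` beyond order `M - d`; hence it is `O(t ^ (M + 1 - d))`. The Mellin convergence criterion
then applies in the strip `d - M - 1 < Re α`.
-/

open Complex MeasureTheory Set Filter Topology Asymptotics

theorem Asymptotics.IsBigO.prod_sub_one {ι α R : Type*} [SeminormedCommRing R] {l : Filter α}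
    {s : Finset ι} {f : ι → α → R} {g : α → ℝ} (hg : g =O[l] (1 : α → ℝ))
    (hf : ∀ i ∈ s, (fun x => f i x - 1) =O[l] g) :
    (fun x => ∏ i ∈ s, f i x - 1) =O[l] g := by
  classical
  induction s using Finset.induction_on with
  | empty => simpa using isBigO_zero g l
  | insert j s hj ih =>
    have ih := ih fun i hi => hf i (Finset.mem_insert_of_mem hi)
    have hbdd : (fun x => ∏ i ∈ s, f i x) =O[l] (1 : α → ℝ) := by
      simpa using (ih.trans hg).add (isBigO_const_const (1 : R) one_ne_zero l)
    simp only [Finset.prod_insert hj]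
    have key : (fun x => f j x * ∏ i ∈ s, f i x - 1) =
        fun x => (f j x - 1) * ∏ i ∈ s, f i x + (∏ i ∈ s, f i x - 1) := by
      ext x; ring
    rw [key]
    have head := (hf j (Finset.mem_insert_self j s)).mul hbdd
    simp only [Pi.one_apply, mul_one] at head
    exact head.add ih

theorem isBigO_sub_sum_range_pow_of_hasSum {𝕜 : Type*} [NontriviallyNormedField 𝕜]
    [CompleteSpace 𝕜] {a : ℕ → 𝕜} {f : 𝕜 → 𝕜} {r : ℝ} (hr : 0 < r)
    (hf : ∀ z, 0 < ‖z‖ → ‖z‖ < r → HasSum (fun k => a k * z ^ k) (f z)) (n : ℕ) :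
    (fun z => f z - ∑ k ∈ Finset.range n, a k * z ^ k) =O[𝓝[≠] 0] fun z => ‖z‖ ^ n := by
  set p := FormalMultilinearSeries.ofScalars 𝕜 a
  obtain ⟨z₀, hz₀, hz₀r⟩ := NormedField.exists_norm_lt 𝕜 hr
  have hradius : (‖z₀‖₊ : ENNReal) ≤ p.radius := by
    refine p.le_radius_of_tendsto (l := 0) ?_
    simpa [p, FormalMultilinearSeries.ofScalars_norm] using
      (hf z₀ hz₀ hz₀r).summable.tendsto_atTop_zero.norm
  have hp := (p.hasFPowerSeriesOnBall (lt_of_lt_of_le (by simpa using hz₀) hradius))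
  refine ((hp.hasFPowerSeriesAt.isBigO_sub_partialSum_pow n).mono nhdsWithin_le_nhds).congr' ?_
    .rfl
  filter_upwards [self_mem_nhdsWithin, nhdsWithin_le_nhds (Metric.ball_mem_nhds 0 hr)]
    with z hz hzr
  simp only [zero_add, FormalMultilinearSeries.partialSum, FormalMultilinearSeries.sum, p,
    FormalMultilinearSeries.ofScalars_apply_eq, smul_eq_mul]
  rw [(hf z (norm_pos_iff.2 hz) (by simpa using hzr)).tsum_eq]

theorem isBigO_rpow_nhdsGT_zero_of_le {x y : ℝ} (hxy : x ≤ y) :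
    (fun t : ℝ => t ^ y) =O[𝓝[>] 0] (· ^ x) := by
  refine IsBigO.of_bound 1 ?_
  filter_upwards [Ioo_mem_nhdsGT one_pos] with t ht
  rw [one_mul, Real.norm_of_nonneg (Real.rpow_nonneg ht.1.le _),
    Real.norm_of_nonneg (Real.rpow_nonneg ht.1.le _)]
  exact Real.rpow_le_rpow_of_exponent_ge ht.1 ht.2.le hxy

theorem isBigO_cexp_neg_mul_rpow_atTop {w : ℂ} (hw : 0 < w.re) (s : ℝ) :
    (fun t : ℝ => cexp (-w * t)) =O[atTop] (· ^ s) :=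
  (isBigO_of_le (g := fun t => Real.exp (-w.re * t)) _ fun t => by simp [norm_exp]).trans
    (isLittleO_exp_neg_mul_rpow_atTop hw s).isBigO

theorem isBigO_cexp_neg_mul_mul_sum_pow_atTop {w : ℂ} (hw : 0 < w.re) (s : ℝ) (K : Finset ℕ)
    (a : ℕ → ℂ) :
    (fun t : ℝ => cexp (-w * t) * ∑ k ∈ K, a k * (t : ℂ) ^ k) =O[atTop] (· ^ s) := by
  simp only [Finset.mul_sum]
  refine IsBigO.fun_sum fun k _ => ?_
  have hpow : (fun t : ℝ => (t : ℂ) ^ k) =O[atTop] fun t : ℝ => t ^ k :=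
    isBigO_of_le _ fun t => by simp
  refine (((isBigO_cexp_neg_mul_rpow_atTop hw (s - k)).mul hpow).const_mul_left (a k)).congr'
    (.of_forall fun t => by ring) ?_
  filter_upwards [eventually_gt_atTop 0] with t ht
  rw [Real.rpow_sub_natCast ht.ne', div_mul_cancel₀ _ (pow_ne_zero _ ht.ne')]

theorem isBigO_inv_one_sub_cexp_neg_mul_sub_one_atTop {w : ℂ} (hw : 0 < w.re) (s : ℝ) :
    (fun t : ℝ => (1 - cexp (-w * t))⁻¹ - 1) =O[atTop] (· ^ s) := by
  have hlim : Tendsto (fun t : ℝ => 1 - cexp (-w * t)) atTop (𝓝 1) := by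
    simpa using ((isBigO_cexp_neg_mul_rpow_atTop hw (-1)).trans_tendsto
      (tendsto_rpow_neg_atTop one_pos)).const_sub 1
  have h := (isBigO_cexp_neg_mul_rpow_atTop hw s).mul ((hlim.inv₀ one_ne_zero).isBigO_one ℝ)
  refine h.congr' ?_ (.of_forall fun t => mul_one _)
  filter_upwards [hlim.eventually_ne one_ne_zero] with t ht
  linear_combination -(mul_inv_cancel₀ ht)

theorem one_sub_cexp_neg_mul_ne_zero {w : ℂ} (hw : 0 < w.re) {t : ℝ} (ht : 0 < t) :
    1 - cexp (-w * t) ≠ 0 := by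
  refine sub_ne_zero.2 (Ne.symm fun h => ?_)
  have := congrArg norm h
  rw [norm_exp, norm_one, Real.exp_eq_one_iff] at this
  simp only [neg_mul, neg_re, mul_re, ofReal_re, ofReal_im, mul_zero, sub_zero, neg_eq_zero,
    mul_eq_zero] at this
  rcases this with h | h <;> linarith

theorem neg_pow_mul_cexp_mul_prod_div {d : ℕ} (w : Fin d → ℂ) (c t : ℂ) :
    (-t) ^ d * cexp (-c * -t) * ∏ i, w i / (cexp (w i * -t) - 1) =
      t ^ d * cexp (c * t) * (∏ i, w i) * ∏ i, (1 - cexp (-w i * t))⁻¹ := by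
  have hfactor : ∀ i, w i / (cexp (w i * -t) - 1) = -(w i * (1 - cexp (-w i * t))⁻¹) := by
    intro i
    rw [div_eq_mul_inv, ← neg_sub, inv_neg, mul_neg, mul_neg, neg_mul]
  have hsign : (-t) ^ d * (-1) ^ d = t ^ d := by rw [← mul_pow]; simp
  simp only [hfactor, Finset.prod_neg, Finset.prod_mul_distrib, Finset.card_univ,
    Fintype.card_fin, neg_mul_neg]
  linear_combination (cexp (c * t) * (∏ i, w i) * ∏ i, (1 - cexp (-w i * t))⁻¹) * hsign

noncomputable def barnesRemainder {d : ℕ} (w : Fin d → ℂ) (c : ℂ) (M : ℕ) (b : ℕ → ℂ) (t : ℝ) :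
    ℂ :=
  (∏ i, (1 - cexp (-(w i) * t))⁻¹) - 1 -
    (t : ℂ) ^ (-(d : ℂ)) * cexp (-c * t) / (∏ i, w i) *
      ∑ k ∈ Finset.range (M + 1), (-1 : ℂ) ^ k * b k * (t : ℂ) ^ k / (k.factorial : ℂ) +
    cexp (-c * t) * ∑ k ∈ Finset.range (M + 1 - d), (c * t) ^ k / (k.factorial : ℂ)

section barnesRemainder

variable {d : ℕ} {w : Fin d → ℂ}

theorem continuousOn_barnesRemainder (hw : ∀ i, 0 < (w i).re) (c : ℂ)
    (M : ℕ) (b : ℕ → ℂ) : ContinuousOn (barnesRemainder w c M b) (Ioi 0) := by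
  have hcpow : ContinuousOn (fun t : ℝ => (t : ℂ) ^ (-(d : ℂ))) (Ioi 0) := fun t ht =>
    ((continuousAt_cpow_const (ofReal_mem_slitPlane.2 ht)).comp
      continuous_ofReal.continuousAt).continuousWithinAt
  refine ((ContinuousOn.sub ?_ continuousOn_const).sub ?_).add (by fun_prop)
  · exact continuousOn_finsetProd _ fun i _ =>
      ContinuousOn.inv₀ (by fun_prop) fun t ht => one_sub_cexp_neg_mul_ne_zero (hw i) ht
  · exact ((hcpow.mul (by fun_prop)).div_const _).mul (by fun_prop)

theorem barnesRemainder_eq (hw : ∀ i, w i ≠ 0) (c : ℂ) (M : ℕ)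
    (b : ℕ → ℂ) {t : ℝ} (ht : t ≠ 0) :
    barnesRemainder w c M b t =
      (t : ℂ) ^ (-(d : ℂ)) * (cexp (-c * t) / ∏ i, w i) *
        ((-(t : ℂ)) ^ d * cexp (-c * -t) * (∏ i, w i / (cexp (w i * -t) - 1)) -
          ∑ k ∈ Finset.range (M + 1), b k / (k.factorial : ℂ) * (-(t : ℂ)) ^ k) -
      cexp (-c * t) *
        (cexp (c * t) - ∑ k ∈ Finset.range (M + 1 - d), (c * t) ^ k / (k.factorial : ℂ)) := by
  have htd : (t : ℂ) ^ d ≠ 0 := pow_ne_zero _ (ofReal_ne_zero.2 ht)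
  have hprod : ∏ i, w i ≠ 0 := Finset.prod_ne_zero_iff.2 fun i _ => hw i
  have hsum : ∑ k ∈ Finset.range (M + 1), b k / (k.factorial : ℂ) * (-(t : ℂ)) ^ k =
      ∑ k ∈ Finset.range (M + 1), (-1 : ℂ) ^ k * b k * (t : ℂ) ^ k / (k.factorial : ℂ) :=
    Finset.sum_congr rfl fun k _ => by rw [neg_pow]; ring
  have hexp : cexp (-c * t) * cexp (c * t) = 1 := by rw [← Complex.exp_add]; simp
  have hprincipal : (t : ℂ) ^ (-(d : ℂ)) * (cexp (-c * t) / ∏ i, w i) *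
      ((t : ℂ) ^ d * cexp (c * t) * (∏ i, w i) * ∏ i, (1 - cexp (-w i * t))⁻¹) =
      ∏ i, (1 - cexp (-w i * t))⁻¹ := by
    rw [cpow_neg, cpow_natCast, div_eq_mul_inv]
    linear_combination (cexp (-c * t) * cexp (c * t) * ∏ i, (1 - cexp (-w i * t))⁻¹) *
        (mul_inv_cancel₀ hprod) + ((∏ i, w i) * (∏ i, w i)⁻¹ * cexp (-c * t) * cexp (c * t) *
        ∏ i, (1 - cexp (-w i * t))⁻¹) * inv_mul_cancel₀ htd +
      (∏ i, (1 - cexp (-w i * t))⁻¹) * hexp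
  rw [barnesRemainder, neg_pow_mul_cexp_mul_prod_div, hsum]
  linear_combination -hprincipal + hexp

theorem barnesRemainder_isBigO_nhdsGT_zero (hw : ∀ i, w i ≠ 0) (c : ℂ)
    (M : ℕ) {b : ℕ → ℂ} {r : ℝ} (hr : 0 < r)
    (hb : ∀ z : ℂ, 0 < ‖z‖ → ‖z‖ < r →
      HasSum (fun k : ℕ => b k * z ^ k / (k.factorial : ℂ))
        (z ^ d * cexp (-c * z) * ∏ i, w i / (cexp (w i * z) - 1))) :
    barnesRemainder w c M b =O[𝓝[>] 0] (· ^ (-((d : ℝ) - M - 1))) := by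
  have hcont : ∀ {f : ℝ → ℂ}, Continuous f → f =O[𝓝[>] 0] (1 : ℝ → ℝ) := fun hf =>
    (hf.tendsto 0).isBigO_one ℝ |>.mono nhdsWithin_le_nhds
  have hcpow : (fun t : ℝ => (t : ℂ) ^ (-(d : ℂ))) =O[𝓝[>] 0] fun t => t ^ (-(d : ℝ)) := by
    refine IsBigO.of_bound 1 ?_
    filter_upwards [self_mem_nhdsWithin] with t (ht : 0 < t)
    rw [norm_cpow_eq_rpow_re_of_pos ht, one_mul, Real.norm_of_nonneg (Real.rpow_nonneg ht.le _)]
    simp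
  have hneg : Tendsto (fun t : ℝ => -(t : ℂ)) (𝓝[>] 0) (𝓝[≠] 0) := by
    refine tendsto_nhdsWithin_of_tendsto_nhds_of_eventually_within _ ?_ ?_
    · exact (continuous_ofReal.neg.tendsto' 0 0 (by simp)).mono_left nhdsWithin_le_nhds
    · filter_upwards [self_mem_nhdsWithin] with t (ht : 0 < t)
      simpa using ht.ne'
  have htail := (isBigO_sub_sum_range_pow_of_hasSum hr
    (fun z h₀ hr => by simpa only [mul_div_right_comm] using hb z h₀ hr) (M + 1)).comp_tendsto hneg
  have hmain := ((hcpow.mul (hcont (f := fun t : ℝ => cexp (-c * t) / ∏ i, w i)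
    (by fun_prop))).mul htail).congr' (g₂ := (· ^ (-((d : ℝ) - M - 1)))) .rfl <| by
      filter_upwards [self_mem_nhdsWithin] with t (ht : 0 < t)
      simp only [Pi.one_apply, mul_one, Function.comp, norm_neg, Complex.norm_real,
        Real.norm_of_nonneg ht.le]
      rw [← Real.rpow_natCast, ← Real.rpow_add ht]
      push_cast
      congr 1
      ring
  have hexp : (fun t : ℝ => cexp (-c * t) *
      (cexp (c * t) - ∑ k ∈ Finset.range (M + 1 - d), (c * t) ^ k / (k.factorial : ℂ)))
      =O[𝓝[>] 0] fun t : ℝ => t ^ (M + 1 - d) := by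
    have hct : Tendsto (fun t : ℝ => c * t) (𝓝[>] 0) (𝓝 0) :=
      ((continuous_const.mul continuous_ofReal).tendsto' 0 0 (by simp)).mono_left
        nhdsWithin_le_nhds
    have hpow : (fun t : ℝ => (c * t) ^ (M + 1 - d)) =O[𝓝[>] 0] fun t : ℝ => t ^ (M + 1 - d) :=
      IsBigO.of_bound (‖c‖ ^ (M + 1 - d)) (.of_forall fun t => by simp [mul_pow])
    simpa using (hcont (f := fun t : ℝ => cexp (-c * t)) (by fun_prop)).mul
      (((Complex.exp_sub_sum_range_isBigO_pow _).comp_tendsto hct).trans hpow)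
  have hexp_le : (fun t : ℝ => t ^ (M + 1 - d)) =O[𝓝[>] 0] (· ^ (-((d : ℝ) - M - 1))) := by
    have hle : -((d : ℝ) - M - 1) ≤ ((M + 1 - d : ℕ) : ℝ) := by
      have := Nat.cast_le (α := ℝ).2 (le_tsub_add (a := d) (b := M + 1))
      push_cast at this
      linarith
    simpa using isBigO_rpow_nhdsGT_zero_of_le hle
  refine (hmain.sub (hexp.trans hexp_le)).congr' ?_ .rfl
  filter_upwards [self_mem_nhdsWithin] with t (ht : 0 < t)
  rw [barnesRemainder_eq hw c M b ht.ne']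
  rfl

theorem barnesRemainder_isBigO_atTop (hw : ∀ i, 0 < (w i).re) {c : ℂ}
    (hc : 0 < c.re) (M : ℕ) (b : ℕ → ℂ) {a : ℝ} (ha : 0 ≤ a) :
    barnesRemainder w c M b =O[atTop] (· ^ (-a)) := by
  have hbdd : ∀ {x : ℝ}, x ≤ 0 → (fun t : ℝ => t ^ x) =O[atTop] (1 : ℝ → ℝ) := fun hx => by
    refine IsBigO.of_bound 1 ?_
    filter_upwards [eventually_ge_atTop 1] with t ht
    rw [Pi.one_apply, norm_one, one_mul, Real.norm_of_nonneg (by positivity)]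
    exact Real.rpow_le_one_of_one_le_of_nonpos ht hx
  have hcpow : (fun t : ℝ => (t : ℂ) ^ (-(d : ℂ))) =O[atTop] (1 : ℝ → ℝ) := by
    refine IsBigO.trans (IsBigO.of_bound 1 ?_) (hbdd (x := -(d : ℝ)) (by simp))
    filter_upwards [eventually_gt_atTop 0] with t ht
    rw [norm_cpow_eq_rpow_re_of_pos ht, one_mul, Real.norm_of_nonneg (by positivity)]
    simp
  have hP : (fun t : ℝ => ∏ i, (1 - cexp (-w i * t))⁻¹ - 1) =O[atTop] (· ^ (-a)) :=
    IsBigO.prod_sub_one (hbdd (neg_nonpos.2 ha)) fun i _ =>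
      isBigO_inv_one_sub_cexp_neg_mul_sub_one_atTop (hw i) _
  have hQ : (fun t : ℝ => (t : ℂ) ^ (-(d : ℂ)) * cexp (-c * t) / (∏ i, w i) *
      ∑ k ∈ Finset.range (M + 1), (-1 : ℂ) ^ k * b k * (t : ℂ) ^ k / (k.factorial : ℂ))
      =O[atTop] (· ^ (-a)) := by
    refine (((hcpow.const_mul_left (∏ i, w i)⁻¹).mul (isBigO_cexp_neg_mul_mul_sum_pow_atTop hc
      (-a) (Finset.range (M + 1)) fun k => (-1 : ℂ) ^ k * b k / k.factorial)).congr (fun t => ?_)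
      fun t => one_mul _)
    simp only [Finset.mul_sum]
    exact Finset.sum_congr rfl fun k _ => by ring
  have hR : (fun t : ℝ => cexp (-c * t) *
      ∑ k ∈ Finset.range (M + 1 - d), (c * t) ^ k / (k.factorial : ℂ)) =O[atTop] (· ^ (-a)) :=
    (isBigO_cexp_neg_mul_mul_sum_pow_atTop hc (-a) (Finset.range (M + 1 - d))
      fun k => c ^ k / k.factorial).congr_left
      fun t => by simp only [mul_pow, div_mul_eq_mul_div, mul_comm (c ^ _)]
  exact (hP.sub hQ).add hR

end barnesRemainder

theorem homogeneous_barnes_integrable_general (d : ℕ) (w : Fin d → ℂ) (c : ℂ)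
    (hw : ∀ i, 0 < (w i).re) (hc : 0 < c.re) (M : ℕ)
    (α : ℂ) (hα : (d : ℝ) - M - 1 < α.re)
    (b : ℕ → ℂ) (r : ℝ) (hr : 0 < r)
    (hb : ∀ z : ℂ, 0 < ‖z‖ → ‖z‖ < r →
      HasSum (fun k : ℕ => b k * z ^ k / (k.factorial : ℂ))
        (z ^ d * Complex.exp (-c * z) * ∏ i, w i / (Complex.exp (w i * z) - 1))) :
    IntegrableOn (fun t : ℝ =>
      (t : ℂ) ^ (α - 1) *
        ((∏ i, (1 - Complex.exp (-(w i) * t))⁻¹) - 1 -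
          (t : ℂ) ^ (-(d : ℂ)) * Complex.exp (-c * t) / (∏ i, w i) *
            ∑ k ∈ Finset.range (M + 1), (-1 : ℂ) ^ k * b k * (t : ℂ) ^ k / (k.factorial : ℂ) +
          Complex.exp (-c * t) *
            ∑ k ∈ Finset.range (M + 1 - d), (c * t) ^ k / (k.factorial : ℂ)))
      (Ioi 0) :=
  mellinConvergent_of_isBigO_rpow (a := |α.re| + 1)
    ((continuousOn_barnesRemainder hw c M b).locallyIntegrableOn measurableSet_Ioi)
    (barnesRemainder_isBigO_atTop hw hc M b (by positivity)) (by linarith [le_abs_self α.re])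
    (barnesRemainder_isBigO_nhdsGT_zero (fun i => ne_of_apply_ne re (hw i).ne') c M hr hb) hα

/-- Integrability of the subtracted integrand in the integral representation of the
homogeneous Barnes zeta function, for `Re(α) > d − M − 1`. The sum
`∑_{k=0}^{M−d}` is realized as a sum over `Finset.range (M + 1 - d)`, which is empty
when `M < d`. -/
theorem homogeneous_barnes_integrable (d : ℕ) (hd : 1 ≤ d) (w : Fin d → ℂ) (c : ℂ)
    (hw : ∀ i, 0 < (w i).re) (hc : 0 < c.re) (M : ℕ)
    (α : ℂ) (hα : (d : ℝ) - M - 1 < α.re)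
    (b : ℕ → ℂ) (r : ℝ) (hr : 0 < r)
    (hb : ∀ z : ℂ, 0 < ‖z‖ → ‖z‖ < r →
      HasSum (fun k : ℕ => b k * z ^ k / (k.factorial : ℂ))
        (z ^ d * Complex.exp (-c * z) * ∏ i, w i / (Complex.exp (w i * z) - 1))) :
    IntegrableOn (fun t : ℝ =>
      (t : ℂ) ^ (α - 1) *
        ((∏ i, (1 - Complex.exp (-(w i) * t))⁻¹) - 1 -
          (t : ℂ) ^ (-(d : ℂ)) * Complex.exp (-c * t) / (∏ i, w i) *
            ∑ k ∈ Finset.range (M + 1), (-1 : ℂ) ^ k * b k * (t : ℂ) ^ k / (k.factorial : ℂ) +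
          Complex.exp (-c * t) *
            ∑ k ∈ Finset.range (M + 1 - d), (c * t) ^ k / (k.factorial : ℂ)))
      (Ioi 0) :=
  homogeneous_barnes_integrable_general d w c hw hc M α hα b r hr hb
end

section
/- For every integer m ≥ 1, Σ_{l=0}^{m−1} (−1)^l · H_{m−l} / ((m−l)! · l!) = (−1)^{m+1} / (m! · m), where H_k = Σ_{i=1}^k 1/i denotes the k-th harmonic number (an identity of rational numbers). -/
open Finset

private def Hq (k : ℕ) : ℚ := ∑ i ∈ Finset.range k, (1 : ℚ) / (i + 1)

private lemma Hq_zero : Hq 0 = 0 := by simp [Hq]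

private lemma Hq_succ (k : ℕ) : Hq (k + 1) = Hq k + 1 / (k + 1) := by
  simp [Hq, Finset.sum_range_succ]

private lemma negpow_congr (a b : ℕ) (h : a % 2 = b % 2) : (-1 : ℚ) ^ a = (-1 : ℚ) ^ b := by
  conv_lhs => rw [← Nat.div_add_mod a 2]
  conv_rhs => rw [← Nat.div_add_mod b 2]
  rw [h, pow_add, pow_add, pow_mul, pow_mul]
  norm_num

private lemma alt_choose (n : ℕ) (hn : n ≠ 0) :
    ∑ i ∈ Finset.range (n + 1), (-1 : ℚ) ^ i * (n.choose i : ℚ) = 0 := by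
  have h := Int.alternating_sum_range_choose_of_ne hn
  have h2 : ((∑ i ∈ Finset.range (n + 1), (-1 : ℤ) ^ i * (n.choose i : ℤ) : ℤ) : ℚ) = 0 := by
    rw [h]; norm_num
  push_cast at h2
  exact h2

/-- `∑_{j=0}^{m} (-1)^j C(m+1, j+1) = 1`. -/
private lemma alt_choose_shift (m : ℕ) :
    ∑ j ∈ Finset.range (m + 1), (-1 : ℚ) ^ j * ((m + 1).choose (j + 1) : ℚ) = 1 := by
  have h := alt_choose (m + 1) (Nat.succ_ne_zero m)
  rw [Finset.sum_range_succ'] at h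
  simp only [pow_zero, Nat.choose_zero_right, Nat.cast_one, one_mul] at h
  have h2 : ∑ j ∈ Finset.range (m + 1), (-1 : ℚ) ^ (j + 1) * ((m + 1).choose (j + 1) : ℚ) = -1 := by
    linarith
  have h3 : ∑ j ∈ Finset.range (m + 1), (-1 : ℚ) ^ j * ((m + 1).choose (j + 1) : ℚ)
      = ∑ j ∈ Finset.range (m + 1), -((-1 : ℚ) ^ (j + 1) * ((m + 1).choose (j + 1) : ℚ)) :=
    Finset.sum_congr rfl fun j _ => by ring
  rw [h3, Finset.sum_neg_distrib, h2]
  norm_num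

/-- `∑_{j=0}^{m} (-1)^j C(m,j)/(j+1) = 1/(m+1)`. -/
private lemma alt_choose_div (m : ℕ) :
    ∑ j ∈ Finset.range (m + 1), (-1 : ℚ) ^ j * (m.choose j : ℚ) / (j + 1) = 1 / (m + 1) := by
  have key : ∀ j : ℕ, (m.choose j : ℚ) / (j + 1) = ((m + 1).choose (j + 1) : ℚ) / (m + 1) := by
    intro j
    have h := Nat.add_one_mul_choose_eq m j
    have h' : ((m + 1) * m.choose j : ℚ) = ((m + 1).choose (j + 1) * (j + 1) : ℚ) := by
      exact_mod_cast congrArg (Nat.cast : ℕ → ℚ) h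
    have hm1 : ((m : ℚ) + 1) ≠ 0 := by positivity
    have hj1 : ((j : ℚ) + 1) ≠ 0 := by positivity
    field_simp
    linarith [h']
  calc ∑ j ∈ Finset.range (m + 1), (-1 : ℚ) ^ j * (m.choose j : ℚ) / (j + 1)
      = ∑ j ∈ Finset.range (m + 1),
          (-1 : ℚ) ^ j * ((m + 1).choose (j + 1) : ℚ) * (1 / (m + 1)) := by
        refine Finset.sum_congr rfl fun j _ => ?_
        rw [mul_div_assoc, key j]; ring
    _ = (∑ j ∈ Finset.range (m + 1), (-1 : ℚ) ^ j * ((m + 1).choose (j + 1) : ℚ)) * (1 / (m + 1)) := by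
        rw [← Finset.sum_mul]
    _ = 1 / (m + 1) := by rw [alt_choose_shift]; ring

/-- Key identity: `∑_{k=0}^{m} (-1)^k C(m,k) H_k = -1/m` for `m ≥ 1`. -/
private lemma key_sum (m : ℕ) (hm : 1 ≤ m) :
    ∑ k ∈ Finset.range (m + 1), (-1 : ℚ) ^ k * (m.choose k : ℚ) * Hq k = -1 / m := by
  induction m with
  | zero => omega
  | succ n ih =>
    rcases Nat.eq_or_lt_of_le hm with h1 | h1
    · -- n + 1 = 1
      have : n = 0 := by omega
      subst this
      simp [Finset.sum_range_succ, Hq_zero, Hq_succ]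
    · have hn : 1 ≤ n := by omega
      have ihn := ih hn
      have hn0 : (n : ℚ) ≠ 0 := by
        exact_mod_cast Nat.cast_ne_zero.mpr (by omega)
      -- shift the sum
      rw [Finset.sum_range_succ']
      simp only [Hq_zero, mul_zero, add_zero]
      have pascal : ∀ j : ℕ, ((n + 1).choose (j + 1) : ℚ) = (n.choose j : ℚ) + (n.choose (j + 1) : ℚ) := by
        intro j
        exact_mod_cast congrArg (Nat.cast : ℕ → ℚ) (Nat.choose_succ_succ n j)
      have split : ∑ j ∈ Finset.range (n + 1), (-1 : ℚ) ^ (j + 1) * ((n + 1).choose (j + 1) : ℚ) * Hq (j + 1)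
          = (∑ j ∈ Finset.range (n + 1), (-1 : ℚ) ^ (j + 1) * (n.choose j : ℚ) * Hq (j + 1))
            + ∑ j ∈ Finset.range (n + 1), (-1 : ℚ) ^ (j + 1) * (n.choose (j + 1) : ℚ) * Hq (j + 1) := by
        rw [← Finset.sum_add_distrib]
        refine Finset.sum_congr rfl fun j _ => ?_
        rw [pascal j]; ring
      rw [split]
      -- second sum equals key_sum n
      have hB : ∑ j ∈ Finset.range (n + 1), (-1 : ℚ) ^ (j + 1) * (n.choose (j + 1) : ℚ) * Hq (j + 1)
          = -1 / n := by
        rw [Finset.sum_range_succ]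
        simp only [Nat.choose_succ_self, Nat.cast_zero, mul_zero, zero_mul, add_zero]
        rw [← ihn, Finset.sum_range_succ']
        simp [Hq_zero]
      -- first sum
      have hA : ∑ j ∈ Finset.range (n + 1), (-1 : ℚ) ^ (j + 1) * (n.choose j : ℚ) * Hq (j + 1)
          = 1 / n - 1 / (n + 1) := by
        have step : ∀ j ∈ Finset.range (n + 1),
            (-1 : ℚ) ^ (j + 1) * (n.choose j : ℚ) * Hq (j + 1)
            = -((-1 : ℚ) ^ j * (n.choose j : ℚ) * Hq j) - (-1 : ℚ) ^ j * (n.choose j : ℚ) / (j + 1) := by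
          intro j _
          rw [Hq_succ]; ring
        rw [Finset.sum_congr rfl step, Finset.sum_sub_distrib]
        have e1 : ∑ j ∈ Finset.range (n + 1), -((-1 : ℚ) ^ j * (n.choose j : ℚ) * Hq j) = 1 / n := by
          rw [Finset.sum_neg_distrib, ihn]; ring
        rw [e1, alt_choose_div]
      rw [hA, hB]
      push_cast
      field_simp
      ring

/-- Harmonic number identity:
`∑_{l=0}^{m−1} (−1)^l H_{m−l} / ((m−l)! l!) = (−1)^{m+1} / (m! m)` in `ℚ`,
where `H_k = ∑_{i=1}^k 1/i`. -/
theorem harmonic_alternating_sum (m : ℕ) (hm : 1 ≤ m) :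
    ∑ l ∈ Finset.range m,
        (-1 : ℚ) ^ l * (∑ i ∈ Finset.range (m - l), (1 : ℚ) / (i + 1)) /
          (((m - l).factorial : ℚ) * (l.factorial : ℚ))
      = (-1 : ℚ) ^ (m + 1) / ((m.factorial : ℚ) * m) := by
  have hm0 : (m : ℚ) ≠ 0 := by exact_mod_cast Nat.cast_ne_zero.mpr (by omega)
  have hfac : (m.factorial : ℚ) ≠ 0 := by
    exact_mod_cast Nat.cast_ne_zero.mpr m.factorial_ne_zero
  -- reflect the sum: l ↦ m - 1 - j
  rw [← Finset.sum_range_reflect]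
  -- Now terms have m - (m - 1 - j) = j + 1 for j < m
  have reindex : ∀ j ∈ Finset.range m,
      (-1 : ℚ) ^ (m - 1 - j) * (∑ i ∈ Finset.range (m - (m - 1 - j)), (1 : ℚ) / (i + 1)) /
          (((m - (m - 1 - j)).factorial : ℚ) * ((m - 1 - j).factorial : ℚ))
      = (-1 : ℚ) ^ m * ((-1 : ℚ) ^ (j + 1) * (m.choose (j + 1) : ℚ) * Hq (j + 1)) / (m.factorial : ℚ) := by
    intro j hj
    have hj' : j < m := Finset.mem_range.mp hj
    have h1 : m - (m - 1 - j) = j + 1 := by omega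
    have h2 : m - (j + 1) = m - 1 - j := by omega
    have hsign : (-1 : ℚ) ^ (m - 1 - j) = (-1 : ℚ) ^ m * (-1 : ℚ) ^ (j + 1) := by
      rw [← pow_add]
      exact negpow_congr _ _ (by omega)
    have hchoose : (m.choose (j + 1) : ℚ) * ((j + 1).factorial : ℚ) * ((m - 1 - j).factorial : ℚ)
        = (m.factorial : ℚ) := by
      rw [← h2]
      exact_mod_cast congrArg (Nat.cast : ℕ → ℚ)
        (Nat.choose_mul_factorial_mul_factorial (by omega : j + 1 ≤ m))
    have hf1 : ((j + 1).factorial : ℚ) ≠ 0 := by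
      exact_mod_cast Nat.cast_ne_zero.mpr (j + 1).factorial_ne_zero
    have hf2 : ((m - 1 - j).factorial : ℚ) ≠ 0 := by
      exact_mod_cast Nat.cast_ne_zero.mpr (m - 1 - j).factorial_ne_zero
    rw [h1, hsign]
    show (-1 : ℚ) ^ m * (-1 : ℚ) ^ (j + 1) * Hq (j + 1) /
        (((j + 1).factorial : ℚ) * ((m - 1 - j).factorial : ℚ)) = _
    field_simp
    rw [← hchoose]
    ring
  rw [Finset.sum_congr rfl reindex]
  have hshift : ∑ j ∈ Finset.range m, (-1 : ℚ) ^ (j + 1) * (m.choose (j + 1) : ℚ) * Hq (j + 1)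
      = -1 / m := by
    rw [← key_sum m hm, Finset.sum_range_succ']
    simp [Hq_zero]
  calc ∑ j ∈ Finset.range m,
        (-1 : ℚ) ^ m * ((-1 : ℚ) ^ (j + 1) * (m.choose (j + 1) : ℚ) * Hq (j + 1)) / (m.factorial : ℚ)
      = (-1 : ℚ) ^ m / (m.factorial : ℚ) *
          ∑ j ∈ Finset.range m, (-1 : ℚ) ^ (j + 1) * (m.choose (j + 1) : ℚ) * Hq (j + 1) := by
        rw [Finset.mul_sum]
        exact Finset.sum_congr rfl fun j _ => by ring
    _ = (-1 : ℚ) ^ (m + 1) / ((m.factorial : ℚ) * m) := by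
        rw [hshift, pow_succ]
        field_simp
end
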